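/- arXiv:1207.4255 — 11 statements merged into one kernel-verified Lean document; each statement's English description precedes it below -/
import Mathlib

section
/- Let K ≥ 1, and for each k let W^(k) ∈ R^{(N−1)×(N−1)} be symmetric positive definite, u^(k) ∈ R^{N−1}, T^(k) > 0, v^(k) > 0, and let ρ > 0, p > 1, with dual exponent p̄ defined by 1/p + 1/p̄ = 1. If max_n ‖(T^(1) u_n^(1),…,T^(K) u_n^(K))‖_{p̄} ≤ ρ, then the zero tuple (y^(1),…,y^(K)) = (0,…,0) is a minimizer of G(y^(1),…,y^(K)) = Σ_k T^(k) ((1/2) v^(k) y^(k)ᵀ (W^(k))⁻¹ y^(k) + u^(k)ᵀ y^(k)) + ρ Σ_{n=1}^{N−1} ‖(y_n^(1),…,y_n^(K))‖_p over (R^{N−1})^K. -/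
open Matrix Finset

/-!
The objective splits into a quadratic part, nonnegative because each `(W k)⁻¹` is positive
semidefinite, and the linear part plus the penalty. Coordinatewise, Hölder's inequality bounds
the linear part from below by minus the `ℓ_p` norm times the dual norm of the coefficients, and
the latter is at most `ρ`, so the penalty absorbs it. Hence the objective is nonnegative, and it
vanishes at `0`.
-/

lemma Matrix.PosSemidef.dotProduct_inv_mulVec_nonneg {n : Type*} [Fintype n] [DecidableEq n]
    {W : Matrix n n ℝ} (hW : W.PosSemidef) (y : n → ℝ) : 0 ≤ y ⬝ᵥ (W⁻¹ *ᵥ y) := by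
  simpa using hW.inv.dotProduct_mulVec_nonneg y

section Holder

variable {ι κ : Type*} [Fintype ι] [Fintype κ] {p q ρ : ℝ}

lemma neg_sum_mul_le_mul_Lp_of_Lq_le (hpq : p.HolderConjugate q) {c y : κ → ℝ}
    (hc : (∑ k, |c k| ^ q) ^ (1 / q) ≤ ρ) :
    -∑ k, c k * y k ≤ ρ * (∑ k, |y k| ^ p) ^ (1 / p) :=
  calc -∑ k, c k * y k = ∑ k, c k * -y k := by simp only [mul_neg, sum_neg_distrib]
    _ ≤ (∑ k, |c k| ^ q) ^ (1 / q) * (∑ k, |-y k| ^ p) ^ (1 / p) :=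
      Real.inner_le_Lp_mul_Lq _ _ _ hpq.symm
    _ ≤ ρ * (∑ k, |y k| ^ p) ^ (1 / p) := by
      simp only [abs_neg]
      gcongr

lemma sum_dotProduct_add_mul_sum_Lp_nonneg (hpq : p.HolderConjugate q) (c y : κ → ι → ℝ)
    (hc : ∀ i, (∑ k, |c k i| ^ q) ^ (1 / q) ≤ ρ) :
    0 ≤ ∑ k, c k ⬝ᵥ y k + ρ * ∑ i, (∑ k, |y k i| ^ p) ^ (1 / p) := by
  have hswap : ∑ k, c k ⬝ᵥ y k = ∑ i, ∑ k, c k i * y k i := by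
    simp only [dotProduct]
    exact sum_comm
  rw [hswap, mul_sum, ← sum_add_distrib]
  exact sum_nonneg fun i _ => neg_le_iff_add_nonneg'.mp (neg_sum_mul_le_mul_Lp_of_Lq_le hpq (hc i))

end Holder

theorem offDiagonal_update_zero_isMinOn_general (n K : ℕ)
    (W : Fin K → Matrix (Fin n) (Fin n) ℝ) (hW : ∀ k, (W k).PosDef)
    (u : Fin K → Fin n → ℝ) (T v : Fin K → ℝ)
    (hT : ∀ k, 0 < T k) (hv : ∀ k, 0 < v k)
    (ρ p pd : ℝ) (hp : 1 < p) (hpd : 1 / p + 1 / pd = 1)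
    (hdual : ∀ i : Fin n, (∑ k, |T k * u k i| ^ pd) ^ (1 / pd) ≤ ρ) :
    IsMinOn
      (fun y : Fin K → Fin n → ℝ =>
        ∑ k, T k * ((1 / 2) * v k * (y k ⬝ᵥ ((W k)⁻¹ *ᵥ y k)) + u k ⬝ᵥ y k)
          + ρ * ∑ i, (∑ k, |y k i| ^ p) ^ (1 / p))
      (Set.univ : Set (Fin K → Fin n → ℝ)) 0 := by
  have hpq : p.HolderConjugate pd := Real.holderConjugate_iff.mpr ⟨hp, by simpa [one_div] using hpd⟩
  refine isMinOn_univ_iff.mpr fun y => ?_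
  have hquad : ∀ k, 0 ≤ T k * ((1 / 2) * v k * (y k ⬝ᵥ ((W k)⁻¹ *ᵥ y k))) := fun k => by
    have := (hW k).posSemidef.dotProduct_inv_mulVec_nonneg (y k)
    have := hT k
    have := hv k
    positivity
  have hlin := sum_dotProduct_add_mul_sum_Lp_nonneg hpq (fun k => T k • u k) y hdual
  simp only [smul_dotProduct, smul_eq_mul] at hlin
  simp only [Pi.zero_apply, zero_dotProduct, dotProduct_zero, mul_zero, add_zero, abs_zero,
    Real.zero_rpow hpq.ne_zero, sum_const_zero, Real.zero_rpow (one_div_ne_zero hpq.ne_zero),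
    mul_add, sum_add_distrib]
  linarith [sum_nonneg fun k (_ : k ∈ univ) => hquad k]

/-- if `max_n ‖(T¹ u_n¹, …, Tᴷ u_nᴷ)‖_{p̄} ≤ ρ` (where `p̄` is the dual exponent
of `p`, i.e. `1/p + 1/p̄ = 1`), then the zero tuple minimizes the off-diagonal update
subproblem `G` over `(ℝ^{N−1})^K`. -/
theorem offDiagonal_update_zero_isMinOn (n K : ℕ) (hK : 0 < K)
    (W : Fin K → Matrix (Fin n) (Fin n) ℝ) (hW : ∀ k, (W k).PosDef)
    (u : Fin K → Fin n → ℝ) (T v : Fin K → ℝ)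
    (hT : ∀ k, 0 < T k) (hv : ∀ k, 0 < v k)
    (ρ p pd : ℝ) (hρ : 0 < ρ) (hp : 1 < p) (hpd : 1 / p + 1 / pd = 1)
    (hdual : ∀ i : Fin n, (∑ k, |T k * u k i| ^ pd) ^ (1 / pd) ≤ ρ) :
    IsMinOn
      (fun y : Fin K → Fin n → ℝ =>
        ∑ k, T k * ((1 / 2) * v k * (y k ⬝ᵥ ((W k)⁻¹ *ᵥ y k)) + u k ⬝ᵥ y k)
          + ρ * ∑ i, (∑ k, |y k i| ^ p) ^ (1 / p))
      (Set.univ : Set (Fin K → Fin n → ℝ)) 0 :=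
  offDiagonal_update_zero_isMinOn_general n K W hW u T v hT hv ρ p pd hp hpd hdual
end

section
/- Let q ∈ R^K with q_k > 0 for all k, c ∈ R^K, and ρ > 0. If r* minimizes φ(r) = (1/2)(r − c)ᵀ diag(q)⁻¹ (r − c) over the set {r ∈ R^K : ‖r‖_1 ≤ ρ}, then x* = diag(q)⁻¹ (c − r*) minimizes f_∞(x) = (1/2) xᵀ diag(q) x − cᵀ x + ρ ‖x‖_∞ over R^K. -/
/-! Weak duality through the Lagrangian `L(x) = ½ xᵀ diag(q) x − (c − r*)ᵀ x`: Hölder's inequality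
`r*ᵀ x ≤ ‖r*‖₁ ‖x‖_∞ ≤ ρ ‖x‖_∞` gives `f_∞ ≥ L`, and completing the square shows that `L` is
minimized at `x* = diag(q)⁻¹ (c − r*)`. Since `x* = −∇φ(r*)`, first-order optimality of `r*` on the
convex `ℓ₁` ball says that `r*` maximizes `rᵀ x*` over the ball; that maximum is `ρ ‖x*‖_∞`,
attained at a signed vertex `±ρ eₖ`, so `f_∞(x*) = L(x*)`. -/

open Set

theorem IsMinOn.hasFDerivAt_nonneg_of_convex {E : Type*} [NormedAddCommGroup E]
    [NormedSpace ℝ E] {f : E → ℝ} {f' : E →L[ℝ] ℝ} {s : Set E} {a y : E}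
    (h : IsMinOn f s a) (hs : Convex ℝ s) (ha : a ∈ s) (hy : y ∈ s)
    (hf : HasFDerivAt f f' a) : 0 ≤ f' (y - a) :=
  h.localize.hasFDerivWithinAt_nonneg hf.hasFDerivWithinAt
    (sub_mem_posTangentConeAt_of_segment_subset (hs.segment_subset ha hy))

theorem isMinOn_univ_sum_apply {ι β : Type*} {α : ι → Type*} [Fintype ι]
    [AddCommMonoid β] [PartialOrder β] [IsOrderedAddMonoid β]
    {g : ∀ k, α k → β} {x₀ : ∀ k, α k} (h : ∀ k, IsMinOn (g k) univ (x₀ k)) :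
    IsMinOn (fun x : ∀ k, α k => ∑ k, g k (x k)) univ x₀ :=
  isMinOn_univ_iff.2 fun x => Finset.sum_le_sum fun k _ => isMinOn_univ_iff.1 (h k) (x k)

theorem isMinOn_mul_sq_div_two_sub_mul {q : ℝ} (hq : 0 < q) (b : ℝ) :
    IsMinOn (fun x => q * x ^ 2 / 2 - b * x) univ (b / q) := by
  refine isMinOn_univ_iff.2 fun x => ?_
  have key : q * x ^ 2 / 2 - b * x - (q * (b / q) ^ 2 / 2 - b * (b / q)) =
      q * (x - b / q) ^ 2 / 2 := by
    field_simp
    ring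
  linarith [mul_nonneg hq.le (sq_nonneg (x - b / q))]

section

variable {ι : Type*} [Fintype ι]

theorem iSup_abs_eq_norm (x : ι → ℝ) : ⨆ k, |x k| = ‖x‖ :=
  le_antisymm (Real.iSup_le (fun k => norm_le_pi_norm x k) (norm_nonneg x))
    ((pi_norm_le_iff_of_nonneg (Real.iSup_nonneg fun k => abs_nonneg (x k))).2
      fun k => le_ciSup (Finite.bddAbove_range fun k => |x k|) k)

theorem convex_setOf_sum_abs_le (ρ : ℝ) : Convex ℝ {r : ι → ℝ | ∑ k, |r k| ≤ ρ} := by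
  intro x hx y hy a b ha hb hab
  calc ∑ k, |(a • x + b • y) k| ≤ ∑ k, (a * |x k| + b * |y k|) :=
        Finset.sum_le_sum fun k _ => by
          simpa [abs_mul, abs_of_nonneg ha, abs_of_nonneg hb] using abs_add_le (a * x k) (b * y k)
    _ = a * ∑ k, |x k| + b * ∑ k, |y k| := by
        rw [Finset.sum_add_distrib, Finset.mul_sum, Finset.mul_sum]
    _ ≤ a * ρ + b * ρ := by gcongr; exacts [hx, hy]
    _ = ρ := by rw [← add_mul, hab, one_mul]

theorem sum_mul_le_sum_abs_mul_norm (r y : ι → ℝ) : ∑ k, r k * y k ≤ (∑ k, |r k|) * ‖y‖ := by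
  rw [Finset.sum_mul]
  refine Finset.sum_le_sum fun k _ => ?_
  calc r k * y k ≤ |r k| * |y k| := by rw [← abs_mul]; exact le_abs_self _
    _ ≤ |r k| * ‖y‖ := by gcongr; exact norm_le_pi_norm y k

theorem exists_sum_abs_le_sum_mul_eq_mul_norm (x : ι → ℝ) {ρ : ℝ} (hρ : 0 ≤ ρ) :
    ∃ r : ι → ℝ, ∑ k, |r k| ≤ ρ ∧ ∑ k, r k * x k = ρ * ‖x‖ := by
  classical
  cases isEmpty_or_nonempty ι
  · exact ⟨0, by simp [hρ], by simp [Subsingleton.elim x 0]⟩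
  obtain ⟨k₀, hk₀⟩ := Finite.exists_max fun k => |x k|
  have hnorm : ‖x‖ = |x k₀| :=
    le_antisymm ((pi_norm_le_iff_of_nonneg (abs_nonneg _)).2 hk₀) (norm_le_pi_norm x k₀)
  obtain ⟨s, hs, hsx⟩ : ∃ s : ℝ, |s| = 1 ∧ s * x k₀ = |x k₀| := by
    rcases le_or_gt 0 (x k₀) with hx | hx
    exacts [⟨1, by simp [abs_of_nonneg hx]⟩, ⟨-1, by simp [abs_of_neg hx]⟩]
  refine ⟨Pi.single k₀ (ρ * s), ?_, ?_⟩ <;>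
    rw [Finset.sum_eq_single k₀ (fun k _ hk => by simp [hk]) (by simp)]
  · simp [abs_mul, hs, abs_of_nonneg hρ]
  · rw [Pi.single_eq_same, mul_assoc, hsx, hnorm]

theorem sum_mul_eq_mul_norm_of_forall_sum_mul_le {r x : ι → ℝ} {ρ : ℝ} (hr : ∑ k, |r k| ≤ ρ)
    (hmax : ∀ r' : ι → ℝ, ∑ k, |r' k| ≤ ρ → ∑ k, r' k * x k ≤ ∑ k, r k * x k) :
    ∑ k, r k * x k = ρ * ‖x‖ := by
  obtain ⟨r', hr', hr'x⟩ := exists_sum_abs_le_sum_mul_eq_mul_norm x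
    ((Finset.sum_nonneg fun k _ => abs_nonneg (r k)).trans hr)
  exact le_antisymm ((sum_mul_le_sum_abs_mul_norm r x).trans
    (mul_le_mul_of_nonneg_right hr (norm_nonneg x))) (hr'x ▸ hmax r' hr')

theorem hasFDerivAt_half_sum_sq_sub_div (c q a : ι → ℝ) :
    HasFDerivAt (fun r : ι → ℝ => (1 / 2) * ∑ k, (r k - c k) ^ 2 / q k)
      (∑ k, ((a k - c k) / q k) • ContinuousLinearMap.proj (R := ℝ) (φ := fun _ : ι => ℝ) k) a := by
  have hterm : ∀ k, HasFDerivAt (fun r : ι → ℝ => (r k - c k) ^ 2 / q k)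
      ((2 * (a k - c k) / q k) • ContinuousLinearMap.proj (R := ℝ) (φ := fun _ : ι => ℝ) k) a := by
    intro k
    have h1 : HasDerivAt (fun t : ℝ => (t - c k) ^ 2 / q k) (2 * (a k - c k) / q k) (a k) := by
      simpa using (((hasDerivAt_id (a k)).sub_const (c k)).pow 2).div_const (q k)
    exact h1.comp_hasFDerivAt (f := fun r : ι → ℝ => r k) a (hasFDerivAt_apply k a)
  refine ((HasFDerivAt.fun_sum fun k _ => hterm k).const_mul (1 / 2)).congr_fderiv ?_
  ext y
  simp only [one_div, smul_apply, sum_apply, ContinuousLinearMap.proj_apply, smul_eq_mul]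
  rw [Finset.mul_sum]
  exact Finset.sum_congr rfl fun k _ => by ring

theorem sum_mul_le_of_isMinOn_half_sum_sq_sub_div {c q rs : ι → ℝ} {ρ : ℝ}
    (hrs : ∑ k, |rs k| ≤ ρ)
    (hmin : IsMinOn (fun r : ι → ℝ => (1 / 2) * ∑ k, (r k - c k) ^ 2 / q k)
      {r : ι → ℝ | ∑ k, |r k| ≤ ρ} rs)
    (r : ι → ℝ) (hr : ∑ k, |r k| ≤ ρ) :
    ∑ k, r k * ((c k - rs k) / q k) ≤ ∑ k, rs k * ((c k - rs k) / q k) := by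
  have := hmin.hasFDerivAt_nonneg_of_convex (convex_setOf_sum_abs_le ρ) hrs hr
    (hasFDerivAt_half_sum_sq_sub_div c q rs)
  simp only [sum_apply, smul_apply, ContinuousLinearMap.proj_apply, Pi.sub_apply,
    smul_eq_mul] at this
  rw [← sub_nonneg, ← Finset.sum_sub_distrib]
  exact this.trans_eq (Finset.sum_congr rfl fun k _ => by ring)

end

theorem linf_quad_from_l1_constrained_dual_general (K : ℕ) (q c : Fin K → ℝ)
    (hq : ∀ k, 0 < q k) (ρ : ℝ)
    (rs : Fin K → ℝ) (hmem : ∑ k, |rs k| ≤ ρ)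
    (hmin : IsMinOn (fun r : Fin K → ℝ => (1 / 2) * ∑ k, (r k - c k) ^ 2 / q k)
      {r : Fin K → ℝ | ∑ k, |r k| ≤ ρ} rs) :
    IsMinOn
      (fun x : Fin K → ℝ =>
        (1 / 2) * ∑ k, q k * x k ^ 2 - ∑ k, c k * x k + ρ * ⨆ k, |x k|)
      (Set.univ : Set (Fin K → ℝ)) (fun k => (c k - rs k) / q k) := by
  set xs : Fin K → ℝ := fun k => (c k - rs k) / q k
  have hslack : ∑ k, rs k * xs k = ρ * ‖xs‖ :=
    sum_mul_eq_mul_norm_of_forall_sum_mul_le hmem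
      (sum_mul_le_of_isMinOn_half_sum_sq_sub_div hmem hmin)
  have hlagr : IsMinOn (fun x : Fin K → ℝ => ∑ k, (q k * x k ^ 2 / 2 - (c k - rs k) * x k))
      univ xs :=
    isMinOn_univ_sum_apply fun k => isMinOn_mul_sq_div_two_sub_mul (hq k) (c k - rs k)
  have hsplit : ∀ x : Fin K → ℝ,
      (1 / 2) * ∑ k, q k * x k ^ 2 - ∑ k, c k * x k + ρ * ⨆ k, |x k| =
        ∑ k, (q k * x k ^ 2 / 2 - (c k - rs k) * x k) + (ρ * ‖x‖ - ∑ k, rs k * x k) := by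
    intro x
    simp only [iSup_abs_eq_norm, Finset.sum_sub_distrib, sub_mul, ← Finset.sum_div]
    ring
  refine isMinOn_univ_iff.2 fun x => ?_
  simp only [hsplit, hslack, sub_self, add_zero]
  linarith [isMinOn_univ_iff.1 hlagr x, sum_mul_le_sum_abs_mul_norm rs x,
    mul_le_mul_of_nonneg_right hmem (norm_nonneg x)]

/-- if `r*` minimizes `φ(r) = (1/2)(r − c)ᵀ diag(q)⁻¹ (r − c)` over the
`ℓ₁` ball `{r : ‖r‖₁ ≤ ρ}`, then `x* = diag(q)⁻¹ (c − r*)` minimizes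
`f_∞(x) = (1/2) xᵀ diag(q) x − cᵀ x + ρ ‖x‖_∞` over `ℝᴷ`. -/
theorem linf_quad_from_l1_constrained_dual (K : ℕ) (q c : Fin K → ℝ)
    (hq : ∀ k, 0 < q k) (ρ : ℝ) (hρ : 0 < ρ)
    (rs : Fin K → ℝ) (hmem : ∑ k, |rs k| ≤ ρ)
    (hmin : IsMinOn (fun r : Fin K → ℝ => (1 / 2) * ∑ k, (r k - c k) ^ 2 / q k)
      {r : Fin K → ℝ | ∑ k, |r k| ≤ ρ} rs) :
    IsMinOn
      (fun x : Fin K → ℝ =>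
        (1 / 2) * ∑ k, q k * x k ^ 2 - ∑ k, c k * x k + ρ * ⨆ k, |x k|)
      (Set.univ : Set (Fin K → ℝ)) (fun k => (c k - rs k) / q k) :=
  linf_quad_from_l1_constrained_dual_general K q c hq ρ rs hmem hmin
end

section
/- Let q ∈ R^K with q_k > 0 for all k, c ∈ R^K with c_k ≠ 0 for all k, and ρ > 0 with ‖c‖_1 > ρ. Then any minimizer r* of φ(r) = (1/2)(r − c)ᵀ diag(q)⁻¹ (r − c) over {r ∈ R^K : ‖r‖_1 ≤ ρ} lies in the same orthant as c, i.e. r_k* c_k ≥ 0 for all k. -/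
/-! If a coordinate of `r` had the sign opposite to that of `c`, setting it to `0` would keep `r`
in the `ℓ₁` ball and strictly decrease that coordinate's term `(r k - c k) ^ 2 / q k`, leaving the
other terms unchanged; so `r` would not be a minimizer. -/

open Finset Function

section

variable {ι : Type*} [Fintype ι] [DecidableEq ι]

lemma sum_abs_update_zero_le (r : ι → ℝ) (k : ι) :
    ∑ j, |update r k 0 j| ≤ ∑ j, |r j| :=
  sum_le_sum fun j _ => by
    rcases eq_or_ne j k with rfl | hjk
    · simp
    · rw [update_of_ne hjk]

lemma sq_lt_sq_sub_of_mul_neg {x c : ℝ} (h : x * c < 0) : c ^ 2 < (x - c) ^ 2 := by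
  nlinarith [sq_nonneg x]

lemma sum_sq_sub_div_update_zero_lt {q c r : ι → ℝ} (hq : ∀ j, 0 < q j) {k : ι}
    (hk : r k * c k < 0) :
    ∑ j, (update r k 0 j - c j) ^ 2 / q j < ∑ j, (r j - c j) ^ 2 / q j := by
  have hlt : (update r k 0 k - c k) ^ 2 / q k < (r k - c k) ^ 2 / q k := by
    rw [update_self, zero_sub, neg_sq]
    exact div_lt_div_of_pos_right (sq_lt_sq_sub_of_mul_neg hk) (hq k)
  refine sum_lt_sum (fun j _ => ?_) ⟨k, mem_univ k, hlt⟩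
  rcases eq_or_ne j k with rfl | hjk
  · exact hlt.le
  · rw [update_of_ne hjk]

end

theorem l1_constrained_minimizer_same_orthant_general (K : ℕ) (q c : Fin K → ℝ)
    (hq : ∀ k, 0 < q k)
    (ρ : ℝ)
    (rs : Fin K → ℝ) (hmem : ∑ k, |rs k| ≤ ρ)
    (hmin : IsMinOn (fun r : Fin K → ℝ => (1 / 2) * ∑ k, (r k - c k) ^ 2 / q k)
      {r : Fin K → ℝ | ∑ k, |r k| ≤ ρ} rs) :
    ∀ k, 0 ≤ rs k * c k := by
  intro k
  by_contra! hk
  have hball : ∑ j, |update rs k 0 j| ≤ ρ := (sum_abs_update_zero_le rs k).trans hmem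
  have hle : (1 / 2) * ∑ j, (rs j - c j) ^ 2 / q j ≤
      (1 / 2) * ∑ j, (update rs k 0 j - c j) ^ 2 / q j := hmin hball
  linarith [sum_sq_sub_div_update_zero_lt (c := c) hq hk]

/-- any minimizer `r*` of `φ(r) = (1/2)(r − c)ᵀ diag(q)⁻¹ (r − c)` over the
`ℓ₁` ball `{r : ‖r‖₁ ≤ ρ}` lies in the same orthant as `c`, i.e. `r*_k c_k ≥ 0` for all `k`. -/
theorem l1_constrained_minimizer_same_orthant (K : ℕ) (q c : Fin K → ℝ)
    (hq : ∀ k, 0 < q k) (hc : ∀ k, c k ≠ 0)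
    (ρ : ℝ) (hρ : 0 < ρ) (hcρ : ρ < ∑ k, |c k|)
    (rs : Fin K → ℝ) (hmem : ∑ k, |rs k| ≤ ρ)
    (hmin : IsMinOn (fun r : Fin K → ℝ => (1 / 2) * ∑ k, (r k - c k) ^ 2 / q k)
      {r : Fin K → ℝ | ∑ k, |r k| ≤ ρ} rs) :
    ∀ k, 0 ≤ rs k * c k :=
  l1_constrained_minimizer_same_orthant_general K q c hq ρ rs hmem hmin
end

section
/- Let q ∈ R^K with q_k > 0 for all k, c ∈ R^K with c_k ≠ 0 for all k, and ρ > 0 with ‖c‖_1 > ρ. If g* minimizes the continuous quadratic knapsack objective Σ_k (1/(2 q_k)) (g_k − |c_k|)² over the set {g ∈ R^K : g ≥ 0 componentwise, Σ_k g_k = ρ}, then r* defined by r_k* = sgn(c_k) g_k* minimizes φ(r) = (1/2)(r − c)ᵀ diag(q)⁻¹ (r − c) over {r ∈ R^K : ‖r‖_1 ≤ ρ}. -/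
/-!
Write `ψ` for the knapsack objective, a weighted squared distance to `|c|`. For `r` in the
`ℓ₁` ball, `ψ |r| ≤ φ r` because `||r_k| - |c_k|| ≤ |r_k - c_k|`, while `φ r* ≤ ψ g*`
coordinatewise. It remains to see that `g*` also minimizes `ψ` over `{g ≥ 0, ∑ g ≤ ρ}`:
since `ρ ≤ ∑ |c_k|`, moving every coordinate of such a `g` part of the way towards `|c_k|`
(when it lies below it) reaches total mass exactly `ρ` without increasing any term of `ψ`.
-/

open Finset

section WeightedSqDist

variable {ι : Type*} [Fintype ι]

def weightedSqDist (w a x : ι → ℝ) : ℝ := ∑ k, w k * (x k - a k) ^ 2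

lemma weightedSqDist_mono {w a x y : ι → ℝ} (hw : ∀ k, 0 ≤ w k)
    (h : ∀ k, |x k - a k| ≤ |y k - a k|) : weightedSqDist w a x ≤ weightedSqDist w a y :=
  sum_le_sum fun k _ => mul_le_mul_of_nonneg_left (sq_le_sq.2 (by simpa using h k)) (hw k)

lemma weightedSqDist_abs_le {w a x : ι → ℝ} (hw : ∀ k, 0 ≤ w k) :
    weightedSqDist w (fun k => |a k|) (fun k => |x k|) ≤ weightedSqDist w a x :=
  sum_le_sum fun k _ => mul_le_mul_of_nonneg_left
    (sq_le_sq.2 (by simpa using abs_abs_sub_abs_le_abs_sub (x k) (a k))) (hw k)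

lemma sq_sign_mul_sub_le (a g : ℝ) : (Real.sign a * g - a) ^ 2 ≤ (g - |a|) ^ 2 := by
  rcases lt_trichotomy a 0 with ha | rfl | ha
  · rw [Real.sign_of_neg ha, abs_of_neg ha]; nlinarith
  · simpa using sq_nonneg g
  · rw [Real.sign_of_pos ha, abs_of_pos ha]; simp

lemma abs_sign_le_one (a : ℝ) : |Real.sign a| ≤ 1 := by
  rcases Real.sign_apply_eq a with h | h | h <;> simp [h]

lemma weightedSqDist_sign_mul_le {w a g : ι → ℝ} (hw : ∀ k, 0 ≤ w k) :
    weightedSqDist w a (fun k => Real.sign (a k) * g k) ≤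
      weightedSqDist w (fun k => |a k|) g :=
  sum_le_sum fun k _ => mul_le_mul_of_nonneg_left (sq_sign_mul_sub_le (a k) (g k)) (hw k)

lemma abs_add_mul_max_sub_sub_le {y a θ : ℝ} (h0 : 0 ≤ θ) (h1 : θ ≤ 1) :
    |y + θ * (max y a - y) - a| ≤ |y - a| := by
  rcases le_total a y with h | h
  · simp [max_eq_left h]
  · rw [max_eq_right h, abs_of_nonpos (by nlinarith), abs_of_nonpos (by linarith)]
    nlinarith

lemma exists_sum_eq_abs_sub_le {a g : ι → ℝ} {ρ : ℝ} (hg : ∀ k, 0 ≤ g k)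
    (hgρ : ∑ k, g k ≤ ρ) (hρa : ρ ≤ ∑ k, a k) :
    ∃ g' : ι → ℝ, ((∀ k, 0 ≤ g' k) ∧ ∑ k, g' k = ρ) ∧ ∀ k, |g' k - a k| ≤ |g k - a k| := by
  set S := ∑ k, g k
  set M := ∑ k, max (g k) (a k)
  have hSM : S ≤ M := sum_le_sum fun k _ => le_max_left _ _
  have hρM : ρ ≤ M := hρa.trans (sum_le_sum fun k _ => le_max_right _ _)
  -- `θ` makes the mass of `(1 - θ) g + θ (g ⊔ a)` equal to `ρ`; if `M = S` it is `0 / 0 = 0`.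
  set θ := (ρ - S) / (M - S)
  have hθ0 : 0 ≤ θ := div_nonneg (by linarith) (by linarith)
  have hθ1 : θ ≤ 1 := div_le_one_of_le₀ (by linarith) (by linarith)
  refine ⟨fun k => g k + θ * (max (g k) (a k) - g k), ⟨fun k => ?_, ?_⟩,
    fun k => abs_add_mul_max_sub_sub_le hθ0 hθ1⟩
  · exact add_nonneg (hg k) (mul_nonneg hθ0 (sub_nonneg.2 (le_max_left _ _)))
  · have hmass : ∑ k, (g k + θ * (max (g k) (a k) - g k)) = S + θ * (M - S) := by
      rw [sum_add_distrib, ← mul_sum, sum_sub_distrib]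
    rcases hSM.eq_or_lt with hMS | hMS
    · rw [hmass, ← hMS]; linarith
    · rw [hmass, div_mul_cancel₀ _ (sub_ne_zero.2 hMS.ne')]; ring

lemma IsMinOn.weightedSqDist_of_sum_le {w a gs : ι → ℝ} {ρ : ℝ} (hw : ∀ k, 0 ≤ w k)
    (hρa : ρ ≤ ∑ k, a k)
    (hmin : IsMinOn (weightedSqDist w a) {g | (∀ k, 0 ≤ g k) ∧ ∑ k, g k = ρ} gs) :
    IsMinOn (weightedSqDist w a) {g | (∀ k, 0 ≤ g k) ∧ ∑ k, g k ≤ ρ} gs := by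
  rintro g ⟨hg, hgρ⟩
  obtain ⟨g', hg'mem, hg'a⟩ := exists_sum_eq_abs_sub_le hg hgρ hρa
  exact (hmin hg'mem).trans (weightedSqDist_mono hw hg'a)

lemma half_mul_sum_sq_div (q x : ι → ℝ) :
    (1 / 2) * ∑ k, x k ^ 2 / q k = ∑ k, 1 / (2 * q k) * x k ^ 2 := by
  rw [mul_sum]
  exact sum_congr rfl fun k _ => by ring

end WeightedSqDist

theorem l1_constrained_from_knapsack_general (K : ℕ) (q c : Fin K → ℝ)
    (hq : ∀ k, 0 < q k)
    (ρ : ℝ) (hcρ : ρ < ∑ k, |c k|)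
    (gs : Fin K → ℝ) (hgmem : (∀ k, 0 ≤ gs k) ∧ ∑ k, gs k = ρ)
    (hgmin : IsMinOn (fun g : Fin K → ℝ => ∑ k, 1 / (2 * q k) * (g k - |c k|) ^ 2)
      {g : Fin K → ℝ | (∀ k, 0 ≤ g k) ∧ ∑ k, g k = ρ} gs) :
    (∑ k, |Real.sign (c k) * gs k| ≤ ρ) ∧
    IsMinOn (fun r : Fin K → ℝ => (1 / 2) * ∑ k, (r k - c k) ^ 2 / q k)
      {r : Fin K → ℝ | ∑ k, |r k| ≤ ρ} (fun k => Real.sign (c k) * gs k) := by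
  obtain ⟨hg0, hgsum⟩ := hgmem
  have hw : ∀ k, 0 ≤ 1 / (2 * q k) := fun k => one_div_nonneg.2 (mul_pos two_pos (hq k)).le
  have hφ : ∀ r : Fin K → ℝ, (1 / 2) * ∑ k, (r k - c k) ^ 2 / q k =
      weightedSqDist (fun k => 1 / (2 * q k)) c r := fun r => half_mul_sum_sq_div q _
  have hball : IsMinOn (weightedSqDist (fun k => 1 / (2 * q k)) fun k => |c k|)
      {g | (∀ k, 0 ≤ g k) ∧ ∑ k, g k ≤ ρ} gs :=
    IsMinOn.weightedSqDist_of_sum_le hw hcρ.le hgmin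
  refine ⟨?_, fun r hr => ?_⟩
  · calc ∑ k, |Real.sign (c k) * gs k| ≤ ∑ k, gs k := sum_le_sum fun k _ => by
          rw [abs_mul, abs_of_nonneg (hg0 k)]
          exact mul_le_of_le_one_left (hg0 k) (abs_sign_le_one _)
      _ = ρ := hgsum
  · simp only [Set.mem_ofPred_eq, hφ]
    calc weightedSqDist _ c (fun k => Real.sign (c k) * gs k)
        ≤ weightedSqDist _ (fun k => |c k|) gs := weightedSqDist_sign_mul_le hw
      _ ≤ weightedSqDist _ (fun k => |c k|) (fun k => |r k|) :=
          hball ⟨fun k => abs_nonneg (r k), hr⟩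
      _ ≤ weightedSqDist _ c r := weightedSqDist_abs_le hw

/-- if `g*` minimizes the continuous quadratic knapsack objective
`∑ k, (1/(2 q k)) (g k − |c k|)²` over `{g : g ≥ 0, ∑ k g k = ρ}`, then `r*` defined by
`r*_k = sgn(c_k) g*_k` minimizes `φ(r) = (1/2)(r − c)ᵀ diag(q)⁻¹ (r − c)` over the `ℓ₁`
ball `{r : ‖r‖₁ ≤ ρ}`. -/
theorem l1_constrained_from_knapsack (K : ℕ) (q c : Fin K → ℝ)
    (hq : ∀ k, 0 < q k) (hc : ∀ k, c k ≠ 0)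
    (ρ : ℝ) (hρ : 0 < ρ) (hcρ : ρ < ∑ k, |c k|)
    (gs : Fin K → ℝ) (hgmem : (∀ k, 0 ≤ gs k) ∧ ∑ k, gs k = ρ)
    (hgmin : IsMinOn (fun g : Fin K → ℝ => ∑ k, 1 / (2 * q k) * (g k - |c k|) ^ 2)
      {g : Fin K → ℝ | (∀ k, 0 ≤ g k) ∧ ∑ k, g k = ρ} gs) :
    (∑ k, |Real.sign (c k) * gs k| ≤ ρ) ∧
    IsMinOn (fun r : Fin K → ℝ => (1 / 2) * ∑ k, (r k - c k) ^ 2 / q k)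
      {r : Fin K → ℝ | ∑ k, |r k| ≤ ρ} (fun k => Real.sign (c k) * gs k) :=
  l1_constrained_from_knapsack_general K q c hq ρ hcρ gs hgmem hgmin
end

section
/- Let q ∈ R^K with q_k > 0 for all k, c ∈ R^K with c_k ≠ 0 for all k, and ρ > 0 with ‖c‖_1 > ρ. For ν ∈ R define g(ν) ∈ R^K by g_k(ν) = max(0, |c_k| − ν q_k). If ν satisfies Σ_k g_k(ν) = ρ, then g(ν) is the (unique) minimizer of the continuous quadratic knapsack objective Σ_k (1/(2 q_k)) (g_k − |c_k|)² over the set {g ∈ R^K : g ≥ 0 componentwise, Σ_k g_k = ρ}; conversely, if g(ν) is the minimizer of this problem for some ν, then Σ_k g_k(ν) = ρ. -/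
/-!
Completing the square around `p = softThreshold q a ν` gives, for every `g`,
`objective q a g = objective q a p + objective q p g + ∑ k, (p k - a k) / q k * (g k - p k)`.
Coordinatewise, `(p k - a k) / q k` equals `-ν` where `p k > 0` and is at least `-ν` where
`p k = 0` (there `g k - p k ≥ 0`), so on the feasible set the cross term is at least
`-ν * (∑ g - ∑ p) = 0`. Hence `objective q a g ≥ objective q a p + objective q p g`, and the
last term is a positive definite quadratic in `g - p`, vanishing only at `g = p`.
-/

open Finset

namespace Knapsack

variable {ι : Type*} [Fintype ι]

noncomputable def objective (q a g : ι → ℝ) : ℝ := ∑ k, 1 / (2 * q k) * (g k - a k) ^ 2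

def scaledSimplex (ι : Type*) [Fintype ι] (ρ : ℝ) : Set (ι → ℝ) :=
  {g | (∀ k, 0 ≤ g k) ∧ ∑ k, g k = ρ}

def softThreshold (q a : ι → ℝ) (ν : ℝ) : ι → ℝ := fun k => max 0 (a k - ν * q k)

theorem softThreshold_mem_scaledSimplex {q a : ι → ℝ} {ν ρ : ℝ}
    (hρ : ∑ k, softThreshold q a ν k = ρ) : softThreshold q a ν ∈ scaledSimplex ι ρ :=
  ⟨fun _ => le_max_left _ _, hρ⟩

section

variable {q : ι → ℝ} (hq : ∀ k, 0 < q k)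
include hq

theorem objective_nonneg (a g : ι → ℝ) : 0 ≤ objective q a g :=
  sum_nonneg fun k _ => mul_nonneg (by have := hq k; positivity) (sq_nonneg _)

theorem objective_eq_zero_iff {a g : ι → ℝ} : objective q a g = 0 ↔ g = a := by
  refine ⟨fun h => funext fun k => ?_, fun h => by simp [objective, h]⟩
  have hk := (sum_eq_zero_iff_of_nonneg fun k _ =>
    mul_nonneg (by have := hq k; positivity) (sq_nonneg (g k - a k))).mp h k (mem_univ k)
  simpa [(hq k).ne', sub_eq_zero] using hk

theorem objective_eq_add_add (a p g : ι → ℝ) :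
    objective q a g = objective q a p + objective q p g +
      ∑ k, (p k - a k) / q k * (g k - p k) := by
  simp only [objective, ← sum_add_distrib]
  refine sum_congr rfl fun k _ => ?_
  have hqk := (hq k).ne'
  field_simp
  ring

omit [Fintype ι] in
theorem neg_mul_sub_softThreshold_le (a : ι → ℝ) (ν : ℝ) {x : ℝ} (hx : 0 ≤ x) (k : ι) :
    -ν * (x - softThreshold q a ν k) ≤
      (softThreshold q a ν k - a k) / q k * (x - softThreshold q a ν k) := by
  simp only [softThreshold]
  rcases le_total (a k - ν * q k) 0 with h | h
  · rw [max_eq_left h, div_mul_eq_mul_div, le_div_iff₀ (hq k)]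
    nlinarith [hq k]
  · rw [max_eq_right h, show a k - ν * q k - a k = -ν * q k by ring,
      mul_div_cancel_right₀ _ (hq k).ne']

theorem objective_softThreshold_add_le (a : ι → ℝ) (ν : ℝ) {g : ι → ℝ}
    (hg : g ∈ scaledSimplex ι (∑ k, softThreshold q a ν k)) :
    objective q a (softThreshold q a ν) + objective q (softThreshold q a ν) g ≤
      objective q a g := by
  set p := softThreshold q a ν
  have cross : 0 ≤ ∑ k, (p k - a k) / q k * (g k - p k) :=
    calc (0 : ℝ) = ∑ k, -ν * (g k - p k) := by
          rw [← mul_sum, sum_sub_distrib, hg.2, sub_self, mul_zero]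
      _ ≤ _ := sum_le_sum fun k _ => neg_mul_sub_softThreshold_le hq a ν (hg.1 k) k
  linarith [objective_eq_add_add hq a p g]

variable {a : ι → ℝ} {ν ρ : ℝ} (hρ : ∑ k, softThreshold q a ν k = ρ)
include hρ

theorem isMinOn_softThreshold :
    IsMinOn (objective q a) (scaledSimplex ι ρ) (softThreshold q a ν) := fun g hg => by
  subst hρ
  show objective q a _ ≤ objective q a g
  linarith [objective_softThreshold_add_le hq a ν hg, objective_nonneg hq (softThreshold q a ν) g]

theorem eq_softThreshold_of_isMinOn {g : ι → ℝ} (hg : g ∈ scaledSimplex ι ρ)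
    (hmin : IsMinOn (objective q a) (scaledSimplex ι ρ) g) : g = softThreshold q a ν := by
  have hle : objective q a g ≤ objective q a _ := hmin (softThreshold_mem_scaledSimplex hρ)
  subst hρ
  have := objective_softThreshold_add_le hq a ν hg
  refine (objective_eq_zero_iff hq).mp (le_antisymm ?_ (objective_nonneg hq _ _))
  linarith

end

end Knapsack

open Knapsack in
theorem knapsack_piecewise_linear_characterization_general (K : ℕ) (q c : Fin K → ℝ)
    (hq : ∀ k, 0 < q k)
    (ρ : ℝ) (ν : ℝ) :
    ((∑ k, max 0 (|c k| - ν * q k) = ρ) →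
      ((∀ k, (0 : ℝ) ≤ max 0 (|c k| - ν * q k)) ∧ ∑ k, max 0 (|c k| - ν * q k) = ρ) ∧
      IsMinOn (fun g : Fin K → ℝ => ∑ k, 1 / (2 * q k) * (g k - |c k|) ^ 2)
        {g : Fin K → ℝ | (∀ k, 0 ≤ g k) ∧ ∑ k, g k = ρ}
        (fun k => max 0 (|c k| - ν * q k)) ∧
      (∀ g : Fin K → ℝ, ((∀ k, 0 ≤ g k) ∧ ∑ k, g k = ρ) →
        IsMinOn (fun g : Fin K → ℝ => ∑ k, 1 / (2 * q k) * (g k - |c k|) ^ 2)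
          {g : Fin K → ℝ | (∀ k, 0 ≤ g k) ∧ ∑ k, g k = ρ} g →
        g = fun k => max 0 (|c k| - ν * q k))) ∧
    ((((∀ k, (0 : ℝ) ≤ max 0 (|c k| - ν * q k)) ∧ ∑ k, max 0 (|c k| - ν * q k) = ρ) ∧
      IsMinOn (fun g : Fin K → ℝ => ∑ k, 1 / (2 * q k) * (g k - |c k|) ^ 2)
        {g : Fin K → ℝ | (∀ k, 0 ≤ g k) ∧ ∑ k, g k = ρ}
        (fun k => max 0 (|c k| - ν * q k))) →
      ∑ k, max 0 (|c k| - ν * q k) = ρ) := by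
  refine ⟨fun hρ => ⟨softThreshold_mem_scaledSimplex hρ, isMinOn_softThreshold hq hρ,
    fun g hg hmin => eq_softThreshold_of_isMinOn hq hρ hg hmin⟩, fun h => h.1.2⟩

/-- with `g_k(ν) = max(0, |c_k| − ν q_k)`: if `∑ k g_k(ν) = ρ` then `g(ν)` is the
unique minimizer of the continuous quadratic knapsack objective over
`{g : g ≥ 0, ∑ k g k = ρ}`; conversely, if `g(ν)` is a minimizer of this problem then
`∑ k g_k(ν) = ρ`. -/
theorem knapsack_piecewise_linear_characterization (K : ℕ) (q c : Fin K → ℝ)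
    (hq : ∀ k, 0 < q k) (hc : ∀ k, c k ≠ 0)
    (ρ : ℝ) (hρ : 0 < ρ) (hcρ : ρ < ∑ k, |c k|) (ν : ℝ) :
    ((∑ k, max 0 (|c k| - ν * q k) = ρ) →
      ((∀ k, (0 : ℝ) ≤ max 0 (|c k| - ν * q k)) ∧ ∑ k, max 0 (|c k| - ν * q k) = ρ) ∧
      IsMinOn (fun g : Fin K → ℝ => ∑ k, 1 / (2 * q k) * (g k - |c k|) ^ 2)
        {g : Fin K → ℝ | (∀ k, 0 ≤ g k) ∧ ∑ k, g k = ρ}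
        (fun k => max 0 (|c k| - ν * q k)) ∧
      (∀ g : Fin K → ℝ, ((∀ k, 0 ≤ g k) ∧ ∑ k, g k = ρ) →
        IsMinOn (fun g : Fin K → ℝ => ∑ k, 1 / (2 * q k) * (g k - |c k|) ^ 2)
          {g : Fin K → ℝ | (∀ k, 0 ≤ g k) ∧ ∑ k, g k = ρ} g →
        g = fun k => max 0 (|c k| - ν * q k))) ∧
    ((((∀ k, (0 : ℝ) ≤ max 0 (|c k| - ν * q k)) ∧ ∑ k, max 0 (|c k| - ν * q k) = ρ) ∧
      IsMinOn (fun g : Fin K → ℝ => ∑ k, 1 / (2 * q k) * (g k - |c k|) ^ 2)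
        {g : Fin K → ℝ | (∀ k, 0 ≤ g k) ∧ ∑ k, g k = ρ}
        (fun k => max 0 (|c k| - ν * q k))) →
      ∑ k, max 0 (|c k| - ν * q k) = ρ) :=
  knapsack_piecewise_linear_characterization_general K q c hq ρ ν
end

section
/- Let q ∈ R^K with q_k > 0 for all k, c ∈ R^K with c_k ≠ 0 for all k, and ρ > 0 with ‖c‖_1 > ρ. Let π be a permutation of {1,…,K} sorting the breakpoints in decreasing order, i.e. |c_{π_1}|/q_{π_1} ≥ |c_{π_2}|/q_{π_2} ≥ … ≥ |c_{π_K}|/q_{π_K}, with the convention that the (K+1)-st breakpoint equals 0. Suppose k* ∈ {1,…,K} and ν* = (Σ_{k=1}^{k*} |c_{π_k}| − ρ) / (Σ_{k=1}^{k*} q_{π_k}) satisfy |c_{π_{k*}}|/q_{π_{k*}} ≥ ν* ≥ |c_{π_{k*+1}}|/q_{π_{k*+1}}. Then g* defined by g_k* = max(0, |c_k| − ν* q_k) is the minimizer of the continuous quadratic knapsack objective Σ_k (1/(2 q_k)) (g_k − |c_k|)² over {g ∈ R^K : g ≥ 0 componentwise, Σ_k g_k = ρ}. -/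
/-!
For every `ν`, the point `g_k = max 0 (a_k - ν q_k)` minimizes the Lagrangian
`∑ k, (g_k - a_k)² / (2 q_k) + ν ∑ k, g_k` over `g ≥ 0`, coordinate by coordinate, so it minimizes
the objective over every slice `∑ k, g_k = s` that it lies on. The breakpoint conditions say that
`ν*` separates the breakpoints `|c_{π k}| / q_{π k}` with `k ≤ k*` from the others, so that
`∑ k, g*_k = ∑_{k ≤ k*} (|c_{π k}| - ν* q_{π k})`, which equals `ρ` by the choice of `ν*`.
-/

open Finset

theorem lagrangian_term_max_le {q : ℝ} (hq : 0 < q) (a ν : ℝ) {x : ℝ} (hx : 0 ≤ x) :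
    1 / (2 * q) * (max 0 (a - ν * q) - a) ^ 2 + ν * max 0 (a - ν * q)
      ≤ 1 / (2 * q) * (x - a) ^ 2 + ν * x := by
  have key : (max 0 (a - ν * q) - a) ^ 2 + 2 * q * (ν * max 0 (a - ν * q))
      ≤ (x - a) ^ 2 + 2 * q * (ν * x) := by
    rcases le_total (a - ν * q) 0 with h | h
    · rw [max_eq_left h]
      nlinarith
    · rw [max_eq_right h]
      nlinarith [sq_nonneg (x - a + ν * q)]
  have h2q : 0 < 2 * q := by positivity
  calc 1 / (2 * q) * (max 0 (a - ν * q) - a) ^ 2 + ν * max 0 (a - ν * q)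
      = 1 / (2 * q) * ((max 0 (a - ν * q) - a) ^ 2 + 2 * q * (ν * max 0 (a - ν * q))) := by
        field_simp
    _ ≤ 1 / (2 * q) * ((x - a) ^ 2 + 2 * q * (ν * x)) := by gcongr
    _ = 1 / (2 * q) * (x - a) ^ 2 + ν * x := by field_simp

theorem isMinOn_sum_sq_div_max_sub_mul {ι : Type*} [Fintype ι] {q : ι → ℝ}
    (hq : ∀ k, 0 < q k) (a : ι → ℝ) (ν s : ℝ) (hs : ∑ k, max 0 (a k - ν * q k) = s) :
    IsMinOn (fun g : ι → ℝ => ∑ k, 1 / (2 * q k) * (g k - a k) ^ 2)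
      {g : ι → ℝ | (∀ k, 0 ≤ g k) ∧ ∑ k, g k = s}
      (fun k => max 0 (a k - ν * q k)) := by
  rintro g ⟨hg, hgs⟩
  have hlag := sum_le_sum fun k (_ : k ∈ univ) => lagrangian_term_max_le (hq k) (a k) ν (hg k)
  simp only [sum_add_distrib, ← mul_sum, hgs, hs] at hlag
  simpa using hlag

theorem sum_max_sub_mul_eq_of_separates {ι : Type*} [Fintype ι] [DecidableEq ι]
    (a q : ι → ℝ) (ν : ℝ) (s : Finset ι)
    (h_in : ∀ k ∈ s, ν * q k ≤ a k) (h_out : ∀ k ∉ s, a k ≤ ν * q k) :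
    ∑ k, max 0 (a k - ν * q k) = ∑ k ∈ s, a k - ν * ∑ k ∈ s, q k := by
  rw [← sum_add_sum_compl s, mul_sum, ← sum_sub_distrib]
  have h_compl : ∑ k ∈ sᶜ, max 0 (a k - ν * q k) = 0 :=
    sum_eq_zero fun k hk => max_eq_left (sub_nonpos.mpr (h_out k (mem_compl.mp hk)))
  rw [h_compl, add_zero]
  exact sum_congr rfl fun k hk => max_eq_right (sub_nonneg.mpr (h_in k hk))

theorem knapsack_sorted_breakpoints_solution_general (K : ℕ) (q c : Fin K → ℝ)
    (hq : ∀ k, 0 < q k)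
    (ρ : ℝ)
    (π : Equiv.Perm (Fin K))
    (hsort : ∀ i j : Fin K, i ≤ j → |c (π j)| / q (π j) ≤ |c (π i)| / q (π i))
    (kstar : Fin K) (νs : ℝ)
    (hνs : νs = (∑ k ∈ Finset.Iic kstar, |c (π k)| - ρ) / ∑ k ∈ Finset.Iic kstar, q (π k))
    (hub : νs ≤ |c (π kstar)| / q (π kstar))
    (hlb : ∀ j : Fin K, kstar < j → |c (π j)| / q (π j) ≤ νs) :
    ((∀ k, (0 : ℝ) ≤ max 0 (|c k| - νs * q k)) ∧ ∑ k, max 0 (|c k| - νs * q k) = ρ) ∧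
    IsMinOn (fun g : Fin K → ℝ => ∑ k, 1 / (2 * q k) * (g k - |c k|) ^ 2)
      {g : Fin K → ℝ | (∀ k, 0 ≤ g k) ∧ ∑ k, g k = ρ}
      (fun k => max 0 (|c k| - νs * q k)) := by
  have hQ : 0 < ∑ k ∈ Iic kstar, q (π k) :=
    sum_pos (fun k _ => hq _) ⟨kstar, mem_Iic.mpr le_rfl⟩
  have h_in : ∀ k ∈ Iic kstar, νs * q (π k) ≤ |c (π k)| := fun k hk =>
    (le_div_iff₀ (hq _)).mp (hub.trans (hsort k kstar (mem_Iic.mp hk)))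
  have h_out : ∀ k ∉ Iic kstar, |c (π k)| ≤ νs * q (π k) := fun k hk =>
    (div_le_iff₀ (hq _)).mp (hlb k (not_le.mp (mt mem_Iic.mpr hk)))
  have hsum : ∑ k, max 0 (|c k| - νs * q k) = ρ := by
    rw [← Equiv.sum_comp π, sum_max_sub_mul_eq_of_separates (fun k => |c (π k)|)
      (fun k => q (π k)) νs _ h_in h_out, hνs, div_mul_cancel₀ _ hQ.ne']
    ring
  exact ⟨⟨fun k => le_max_left _ _, hsum⟩,
    isMinOn_sum_sq_div_max_sub_mul hq (fun k => |c k|) νs ρ hsum⟩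

/-- with breakpoints `|c_k|/q_k` sorted decreasingly by a permutation `π`, if
`k*` and `ν* = (∑_{k ≤ k*} |c_{π k}| − ρ) / (∑_{k ≤ k*} q_{π k})` satisfy
`|c_{π k*}|/q_{π k*} ≥ ν* ≥ |c_{π (k*+1)}|/q_{π (k*+1)}` (with the `(K+1)`-st breakpoint
taken to be `0`), then `g*_k = max(0, |c_k| − ν* q_k)` minimizes the continuous quadratic
knapsack objective over `{g : g ≥ 0, ∑ k g k = ρ}`. -/
theorem knapsack_sorted_breakpoints_solution (K : ℕ) (q c : Fin K → ℝ)
    (hq : ∀ k, 0 < q k) (hc : ∀ k, c k ≠ 0)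
    (ρ : ℝ) (hρ : 0 < ρ) (hcρ : ρ < ∑ k, |c k|)
    (π : Equiv.Perm (Fin K))
    (hsort : ∀ i j : Fin K, i ≤ j → |c (π j)| / q (π j) ≤ |c (π i)| / q (π i))
    (kstar : Fin K) (νs : ℝ)
    (hνs : νs = (∑ k ∈ Finset.Iic kstar, |c (π k)| - ρ) / ∑ k ∈ Finset.Iic kstar, q (π k))
    (hub : νs ≤ |c (π kstar)| / q (π kstar))
    (hlb : ∀ j : Fin K, kstar < j → |c (π j)| / q (π j) ≤ νs)
    (hlb0 : 0 ≤ νs) :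
    ((∀ k, (0 : ℝ) ≤ max 0 (|c k| - νs * q k)) ∧ ∑ k, max 0 (|c k| - νs * q k) = ρ) ∧
    IsMinOn (fun g : Fin K → ℝ => ∑ k, 1 / (2 * q k) * (g k - |c k|) ^ 2)
      {g : Fin K → ℝ | (∀ k, 0 ≤ g k) ∧ ∑ k, g k = ρ}
      (fun k => max 0 (|c k| - νs * q k)) :=
  knapsack_sorted_breakpoints_solution_general K q c hq ρ π hsort kstar νs hνs hub hlb
end

section
/- Let q ∈ R^K with q_k > 0 for all k, c ∈ R^K, and ρ > 0. If r* minimizes φ(r) = (1/2)(r − c)ᵀ diag(q)⁻¹ (r − c) over the Euclidean ball {r ∈ R^K : ‖r‖_2 ≤ ρ}, then x* = diag(q)⁻¹ (c − r*) minimizes f_2(x) = (1/2) xᵀ diag(q) x − cᵀ x + ρ ‖x‖_2 over R^K. -/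
/-!
Weak duality: for `‖r‖₂ ≤ ρ`, Cauchy–Schwarz gives `ρ ‖x‖₂ ≥ rᵀx`, and completing the square
gives `(1/2) xᵀ diag(q) x − cᵀx + rᵀx ≥ −φ(r)`, so `f₂ ≥ −φ(r*)` everywhere. At
`x* = diag(q)⁻¹ (c − r*)` the square vanishes, so `f₂(x*) = −φ(r*) − r*ᵀx* + ρ ‖x*‖₂`. The
first-order optimality of `r*` on the ball says that `r*` maximizes `rᵀx*` over the ball, where the
maximum is `ρ ‖x*‖₂`; hence `f₂(x*) ≤ −φ(r*)`.
-/

open Finset Filter Topology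

lemma nonneg_of_forall_nonneg_mul_add_sq_mul {a b : ℝ}
    (h : ∀ t ∈ Set.Ioc (0 : ℝ) 1, 0 ≤ t * a + t ^ 2 * b) : 0 ≤ a := by
  have hlim : Tendsto (fun t : ℝ => a + t * b) (𝓝[>] 0) (𝓝 a) :=
    tendsto_nhdsWithin_of_tendsto_nhds (Continuous.tendsto' (by fun_prop) 0 a (by simp))
  refine ge_of_tendsto hlim ?_
  filter_upwards [Ioc_mem_nhdsGT zero_lt_one] with t ht
  exact nonneg_of_mul_nonneg_right (by linarith [h t ht]) ht.1

variable {ι : Type*} [Fintype ι]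

lemma sqrt_sum_sq_eq_norm_toLp (x : ι → ℝ) : √(∑ i, x i ^ 2) = ‖WithLp.toLp 2 x‖ := by
  simp [EuclideanSpace.norm_eq, sq_abs]

lemma convex_setOf_sqrt_sum_sq_le (ρ : ℝ) :
    Convex ℝ {r : ι → ℝ | √(∑ i, r i ^ 2) ≤ ρ} := by
  have hball : {r : ι → ℝ | √(∑ i, r i ^ 2) ≤ ρ} =
      (WithLp.linearEquiv 2 ℝ (ι → ℝ)).symm ⁻¹' Metric.closedBall 0 ρ := by
    ext r
    simp [sqrt_sum_sq_eq_norm_toLp]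
  rw [hball]
  exact (convex_closedBall _ ρ).linear_preimage _

lemma exists_sqrt_sum_sq_le_and_sum_mul_eq {ρ : ℝ} (hρ : 0 ≤ ρ) (x : ι → ℝ) :
    ∃ r : ι → ℝ, √(∑ i, r i ^ 2) ≤ ρ ∧ ∑ i, r i * x i = ρ * √(∑ i, x i ^ 2) := by
  rcases (Real.sqrt_nonneg (∑ i, x i ^ 2)).eq_or_lt with hN0 | hNpos
  · exact ⟨0, by simpa using hρ, by simp [← hN0]⟩
  set N := √(∑ i, x i ^ 2)
  refine ⟨(ρ / N) • x, ?_, ?_⟩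
  · rw [sqrt_sum_sq_eq_norm_toLp, WithLp.toLp_smul, norm_smul, ← sqrt_sum_sq_eq_norm_toLp,
      Real.norm_of_nonneg (by positivity), div_mul_cancel₀ _ hNpos.ne']
  · have hN2 : N ^ 2 = ∑ i, x i ^ 2 := Real.sq_sqrt (by positivity)
    simp only [Pi.smul_apply, smul_eq_mul, mul_assoc, ← mul_sum, ← sq, ← hN2]
    field_simp

noncomputable def trustRegionObjective (q c r : ι → ℝ) : ℝ := 1 / 2 * ∑ i, (r i - c i) ^ 2 / q i

noncomputable def quadObjective (q c x : ι → ℝ) : ℝ := 1 / 2 * ∑ i, q i * x i ^ 2 - ∑ i, c i * x i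

lemma trustRegionObjective_add_smul (q c r d : ι → ℝ) (t : ℝ) :
    trustRegionObjective q c (r + t • d) = trustRegionObjective q c r
      + t * ∑ i, d i * ((r i - c i) / q i) + t ^ 2 * trustRegionObjective q 0 d := by
  simp only [trustRegionObjective, Pi.add_apply, Pi.smul_apply, Pi.zero_apply, smul_eq_mul,
    sub_zero, mul_sum, ← sum_add_distrib]
  refine sum_congr rfl fun i _ => ?_
  ring

lemma sum_mul_le_of_isMinOn_trustRegionObjective {q c rs : ι → ℝ} {S : Set (ι → ℝ)}
    (hS : Convex ℝ S) (hrs : rs ∈ S) (hmin : IsMinOn (trustRegionObjective q c) S rs)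
    {r : ι → ℝ} (hr : r ∈ S) :
    ∑ i, r i * ((c i - rs i) / q i) ≤ ∑ i, rs i * ((c i - rs i) / q i) := by
  have key := nonneg_of_forall_nonneg_mul_add_sq_mul (a := ∑ i, (r - rs) i * ((rs i - c i) / q i))
    (b := trustRegionObjective q 0 (r - rs)) fun t ht => by
      have : trustRegionObjective q c rs ≤ trustRegionObjective q c (rs + t • (r - rs)) :=
        hmin (hS.add_smul_sub_mem hrs hr (Set.Ioc_subset_Icc_self ht))
      rw [trustRegionObjective_add_smul] at this
      linarith
  simp only [Pi.sub_apply, ← neg_sub (c _), neg_div, mul_neg, sum_neg_distrib, sub_mul,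
    sum_sub_distrib] at key
  linarith

lemma neg_trustRegionObjective_le {q : ι → ℝ} (hq : ∀ i, 0 < q i) (c r x : ι → ℝ) :
    -trustRegionObjective q c r ≤ quadObjective q c x + ∑ i, r i * x i := by
  simp only [trustRegionObjective, quadObjective, mul_sum, ← sum_neg_distrib,
    ← sum_sub_distrib, ← sum_add_distrib]
  refine sum_le_sum fun i _ => ?_
  have hqi := hq i
  have hsq : 1 / 2 * (q i * x i ^ 2) - c i * x i + r i * x i + 1 / 2 * ((r i - c i) ^ 2 / q i)
      = (q i * x i + r i - c i) ^ 2 / (2 * q i) := by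
    field_simp
    ring
  have : 0 ≤ (q i * x i + r i - c i) ^ 2 / (2 * q i) := by positivity
  linarith

lemma quadObjective_div_eq {q : ι → ℝ} (hq : ∀ i, q i ≠ 0) (c r : ι → ℝ) :
    quadObjective q c (fun i => (c i - r i) / q i)
      = -trustRegionObjective q c r - ∑ i, r i * ((c i - r i) / q i) := by
  simp only [trustRegionObjective, quadObjective, mul_sum, ← sum_neg_distrib,
    ← sum_sub_distrib]
  refine sum_congr rfl fun i _ => ?_
  field_simp [hq i]
  ring

theorem l2_quad_from_trust_region_dual_general (K : ℕ) (q c : Fin K → ℝ)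
    (hq : ∀ k, 0 < q k) (ρ : ℝ)
    (rs : Fin K → ℝ) (hmem : Real.sqrt (∑ k, rs k ^ 2) ≤ ρ)
    (hmin : IsMinOn (fun r : Fin K → ℝ => (1 / 2) * ∑ k, (r k - c k) ^ 2 / q k)
      {r : Fin K → ℝ | Real.sqrt (∑ k, r k ^ 2) ≤ ρ} rs) :
    IsMinOn
      (fun x : Fin K → ℝ =>
        (1 / 2) * ∑ k, q k * x k ^ 2 - ∑ k, c k * x k + ρ * Real.sqrt (∑ k, x k ^ 2))
      (Set.univ : Set (Fin K → ℝ)) (fun k => (c k - rs k) / q k) := by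
  set xs : Fin K → ℝ := fun k => (c k - rs k) / q k
  obtain ⟨r, hr, hrxs⟩ :=
    exists_sqrt_sum_sq_le_and_sum_mul_eq ((Real.sqrt_nonneg _).trans hmem) xs
  have hcompl : ρ * √(∑ k, xs k ^ 2) ≤ ∑ k, rs k * xs k :=
    hrxs ▸ sum_mul_le_of_isMinOn_trustRegionObjective (convex_setOf_sqrt_sum_sq_le ρ) hmem hmin hr
  intro x _
  have hdual := neg_trustRegionObjective_le hq c rs x
  have hval := quadObjective_div_eq (fun k => (hq k).ne') c rs
  have hcs : ∑ k, rs k * x k ≤ ρ * √(∑ k, x k ^ 2) :=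
    (Real.sum_mul_le_sqrt_mul_sqrt _ rs x).trans
      (mul_le_mul_of_nonneg_right hmem (Real.sqrt_nonneg _))
  change quadObjective q c xs + _ ≤ quadObjective q c x + _
  linarith

/-- if `r*` minimizes `φ(r) = (1/2)(r − c)ᵀ diag(q)⁻¹ (r − c)` over the
Euclidean ball `{r : ‖r‖₂ ≤ ρ}`, then `x* = diag(q)⁻¹ (c − r*)` minimizes
`f₂(x) = (1/2) xᵀ diag(q) x − cᵀ x + ρ ‖x‖₂` over `ℝᴷ`. -/
theorem l2_quad_from_trust_region_dual (K : ℕ) (q c : Fin K → ℝ)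
    (hq : ∀ k, 0 < q k) (ρ : ℝ) (hρ : 0 < ρ)
    (rs : Fin K → ℝ) (hmem : Real.sqrt (∑ k, rs k ^ 2) ≤ ρ)
    (hmin : IsMinOn (fun r : Fin K → ℝ => (1 / 2) * ∑ k, (r k - c k) ^ 2 / q k)
      {r : Fin K → ℝ | Real.sqrt (∑ k, r k ^ 2) ≤ ρ} rs) :
    IsMinOn
      (fun x : Fin K → ℝ =>
        (1 / 2) * ∑ k, q k * x k ^ 2 - ∑ k, c k * x k + ρ * Real.sqrt (∑ k, x k ^ 2))
      (Set.univ : Set (Fin K → ℝ)) (fun k => (c k - rs k) / q k) :=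
  l2_quad_from_trust_region_dual_general K q c hq ρ rs hmem hmin
end

section
/- Let q ∈ R^K with q_k > 0 for all k, c ∈ R^K with c_k ≠ 0 for all k, and ρ > 0 with ‖c‖_2 > ρ. If λ* ≥ 0 minimizes the dual objective h(λ) = Σ_k c_k² / (q_k + λ q_k²) + ρ² λ over {λ ≥ 0}, then r* defined componentwise by r_k* = c_k / (1 + λ* q_k) minimizes φ(r) = (1/2)(r − c)ᵀ diag(q)⁻¹ (r − c) over the Euclidean ball {r ∈ R^K : ‖r‖_2 ≤ ρ}. -/
/-!
The map `λ ↦ c / (1 + λ q)` parametrises the minimisers of the Lagrangian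
`φ(r) + (λ/2) ‖r‖²`, and the dual objective satisfies the exact slope identity
`h(m) - h(λ) = (m - λ) (ρ² - F(m))` with `F` continuous and `F(λ) = ‖r(λ)‖²`.
One-sided limits of this identity at a minimiser `λ*` of `h` on `[0, ∞)` give primal
feasibility `‖r(λ*)‖² ≤ ρ²` and complementary slackness `λ* (ρ² - ‖r(λ*)‖²) = 0`;
these two KKT conditions make `r(λ*)` optimal for the constrained problem.
-/

open Filter Topology Set

lemma nonneg_and_complementary_of_isMinOn_Ici {h g : ℝ → ℝ} {lam : ℝ} (hlam : 0 ≤ lam)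
    (hmin : IsMinOn h (Ici 0) lam) (hslope : ∀ m, 0 ≤ m → h m - h lam = (m - lam) * g m)
    (hg : ContinuousAt g lam) : 0 ≤ g lam ∧ lam * g lam = 0 := by
  have hsign : ∀ m, 0 ≤ m → 0 ≤ (m - lam) * g m := fun m hm => by
    rw [← hslope m hm]; exact sub_nonneg.mpr (hmin hm)
  have hright : 0 ≤ g lam := by
    refine ge_of_tendsto (hg.mono_left nhdsWithin_le_nhds : Tendsto g (𝓝[>] lam) _) ?_
    filter_upwards [self_mem_nhdsWithin] with m (hm : lam < m)
    exact nonneg_of_mul_nonneg_right (hsign m (hlam.trans hm.le)) (sub_pos.mpr hm)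
  refine ⟨hright, ?_⟩
  rcases hlam.eq_or_lt with rfl | hpos
  · exact zero_mul _
  have hleft : g lam ≤ 0 := by
    refine le_of_tendsto (hg.mono_left nhdsWithin_le_nhds : Tendsto g (𝓝[<] lam) _) ?_
    filter_upwards [Ioo_mem_nhdsLT hpos] with m hm
    exact nonpos_of_mul_nonneg_right (hsign m hm.1.le) (sub_neg.mpr hm.2)
  rw [le_antisymm hleft hright, mul_zero]

lemma isMinOn_of_lagrangian_le {α : Type*} {f g : α → ℝ} {x : α} {lam b : ℝ} (hlam : 0 ≤ lam)
    (hslack : lam * (b - g x) = 0) (hlag : ∀ y, f x + lam * g x ≤ f y + lam * g y) :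
    IsMinOn f {y | g y ≤ b} x :=
  isMinOn_iff.mpr fun y (hy : g y ≤ b) => by
    nlinarith [hlag y, mul_le_mul_of_nonneg_left hy hlam]

lemma div_sub_div_dual_term (q c l m : ℝ) (hq : 0 < q) (hl : 0 ≤ l) (hm : 0 ≤ m) :
    c ^ 2 / (q + m * q ^ 2) - c ^ 2 / (q + l * q ^ 2)
      = (l - m) * (c ^ 2 / ((1 + l * q) * (1 + m * q))) := by
  have hl' : 0 < 1 + l * q := by positivity
  have hm' : 0 < 1 + m * q := by positivity
  rw [show q + l * q ^ 2 = q * (1 + l * q) by ring, show q + m * q ^ 2 = q * (1 + m * q) by ring]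
  field_simp
  ring

lemma sub_sq_div_add_mul_sq_le (q c lam t : ℝ) (hq : 0 < q) (hlam : 0 ≤ lam) :
    (c / (1 + lam * q) - c) ^ 2 / q + lam * (c / (1 + lam * q)) ^ 2
      ≤ (t - c) ^ 2 / q + lam * t ^ 2 := by
  have hpos : 0 < 1 + lam * q := by positivity
  have hgap : (t - c) ^ 2 / q + lam * t ^ 2
      - ((c / (1 + lam * q) - c) ^ 2 / q + lam * (c / (1 + lam * q)) ^ 2)
      = (1 + lam * q) / q * (t - c / (1 + lam * q)) ^ 2 := by
    field_simp
    ring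
  have : 0 ≤ (1 + lam * q) / q * (t - c / (1 + lam * q)) ^ 2 := by positivity
  linarith

section TrustRegion

variable {K : ℕ} (q c : Fin K → ℝ)

lemma dual_objective_sub (hq : ∀ k, 0 < q k) (ρ l m : ℝ) (hl : 0 ≤ l) (hm : 0 ≤ m) :
    (∑ k, c k ^ 2 / (q k + m * q k ^ 2) + ρ ^ 2 * m)
      - (∑ k, c k ^ 2 / (q k + l * q k ^ 2) + ρ ^ 2 * l)
      = (m - l) * (ρ ^ 2 - ∑ k, c k ^ 2 / ((1 + l * q k) * (1 + m * q k))) := by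
  have hsum : ∑ k, c k ^ 2 / (q k + m * q k ^ 2) - ∑ k, c k ^ 2 / (q k + l * q k ^ 2)
      = (l - m) * ∑ k, c k ^ 2 / ((1 + l * q k) * (1 + m * q k)) := by
    rw [Finset.mul_sum, ← Finset.sum_sub_distrib]
    exact Finset.sum_congr rfl fun k _ => div_sub_div_dual_term (q k) (c k) l m (hq k) hl hm
  linear_combination hsum

lemma continuousAt_dual_slope (hq : ∀ k, 0 < q k) {l : ℝ} (hl : 0 ≤ l) :
    ContinuousAt (fun m : ℝ => ∑ k, c k ^ 2 / ((1 + l * q k) * (1 + m * q k))) l := by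
  have hpos : ∀ k, 0 < 1 + l * q k := fun k => by have := hq k; positivity
  fun_prop (disch := exact (mul_pos (hpos _) (hpos _)).ne')

lemma lagrangian_le (hq : ∀ k, 0 < q k) {lam : ℝ} (hlam : 0 ≤ lam) (r : Fin K → ℝ) :
    ∑ k, (c k / (1 + lam * q k) - c k) ^ 2 / q k + lam * ∑ k, (c k / (1 + lam * q k)) ^ 2
      ≤ ∑ k, (r k - c k) ^ 2 / q k + lam * ∑ k, r k ^ 2 := by
  simp only [Finset.mul_sum, ← Finset.sum_add_distrib]
  exact Finset.sum_le_sum fun k _ => sub_sq_div_add_mul_sq_le (q k) (c k) lam (r k) (hq k) hlam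

end TrustRegion

theorem trust_region_from_dual_solution_general (K : ℕ) (q c : Fin K → ℝ)
    (hq : ∀ k, 0 < q k)
    (ρ : ℝ) (hρ : 0 < ρ)
    (lam : ℝ) (hlam : 0 ≤ lam)
    (hmin : IsMinOn (fun l : ℝ => ∑ k, c k ^ 2 / (q k + l * q k ^ 2) + ρ ^ 2 * l)
      {l : ℝ | 0 ≤ l} lam) :
    (Real.sqrt (∑ k, (c k / (1 + lam * q k)) ^ 2) ≤ ρ) ∧
    IsMinOn (fun r : Fin K → ℝ => (1 / 2) * ∑ k, (r k - c k) ^ 2 / q k)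
      {r : Fin K → ℝ | Real.sqrt (∑ k, r k ^ 2) ≤ ρ}
      (fun k => c k / (1 + lam * q k)) := by
  have hslope_at_lam : ∑ k, c k ^ 2 / ((1 + lam * q k) * (1 + lam * q k))
      = ∑ k, (c k / (1 + lam * q k)) ^ 2 :=
    Finset.sum_congr rfl fun k _ => by rw [div_pow, ← sq]
  obtain ⟨hfeas, hslack⟩ := nonneg_and_complementary_of_isMinOn_Ici hlam hmin
    (fun m hm => dual_objective_sub q c hq ρ lam m hlam hm)
    (continuousAt_const.sub (continuousAt_dual_slope q c hq hlam))
  rw [hslope_at_lam, sub_nonneg] at hfeas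
  rw [hslope_at_lam] at hslack
  refine ⟨Real.sqrt_le_iff.mpr ⟨hρ.le, hfeas⟩, ?_⟩
  have hball : {r : Fin K → ℝ | Real.sqrt (∑ k, r k ^ 2) ≤ ρ} ⊆ {r | ∑ k, r k ^ 2 ≤ ρ ^ 2} :=
    fun r hr => (Real.sqrt_le_iff.mp hr).2
  refine (isMinOn_of_lagrangian_le (lam := lam / 2) (by positivity)
    (by linear_combination hslack / 2) fun r => ?_).on_subset hball
  linear_combination (1 / 2 : ℝ) * lagrangian_le q c hq hlam r

/-- if `λ* ≥ 0` minimizes the trust-region dual objective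
`h(λ) = ∑ k, c k² / (q k + λ q k²) + ρ² λ` over `{λ ≥ 0}`, then `r*` defined by
`r*_k = c_k / (1 + λ* q_k)` minimizes the separable quadratic trust-region objective
`φ(r) = (1/2)(r − c)ᵀ diag(q)⁻¹ (r − c)` over the Euclidean ball `{r : ‖r‖₂ ≤ ρ}`. -/
theorem trust_region_from_dual_solution (K : ℕ) (q c : Fin K → ℝ)
    (hq : ∀ k, 0 < q k) (hc : ∀ k, c k ≠ 0)
    (ρ : ℝ) (hρ : 0 < ρ) (hcρ : ρ < Real.sqrt (∑ k, c k ^ 2))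
    (lam : ℝ) (hlam : 0 ≤ lam)
    (hmin : IsMinOn (fun l : ℝ => ∑ k, c k ^ 2 / (q k + l * q k ^ 2) + ρ ^ 2 * l)
      {l : ℝ | 0 ≤ l} lam) :
    (Real.sqrt (∑ k, (c k / (1 + lam * q k)) ^ 2) ≤ ρ) ∧
    IsMinOn (fun r : Fin K → ℝ => (1 / 2) * ∑ k, (r k - c k) ^ 2 / q k)
      {r : Fin K → ℝ | Real.sqrt (∑ k, r k ^ 2) ≤ ρ}
      (fun k => c k / (1 + lam * q k)) :=
  trust_region_from_dual_solution_general K q c hq ρ hρ lam hlam hmin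
end

section
/- Let q ∈ R^K with q_k > 0 for all k, c ∈ R^K, and ρ > 0, and consider f_2(x) = (1/2) xᵀ diag(q) x − cᵀ x + ρ ‖x‖_2. (i) If ‖c‖_2 ≤ ρ, then x* = 0 minimizes f_2 over R^K. (ii) If ‖c‖_2 > ρ and c_k ≠ 0 for all k, and λ* ≥ 0 minimizes the dual objective h(λ) = Σ_k c_k² / (q_k + λ q_k²) + ρ² λ over {λ ≥ 0}, then x* defined componentwise by x_k* = λ* c_k / (1 + λ* q_k) minimizes f_2 over R^K. -/
/-!
The dual objective has derivative `h'(λ) = ρ² - ∑ k, c k² / (1 + λ q k)²`. Since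
`h'(0) = ρ² - ‖c‖² < 0`, a minimizer `λ*` of `h` on `[0, ∞)` is interior, so `h'(λ*) = 0`, which
says exactly `‖x*‖ = λ* ρ`. Together with `λ* (c - diag(q) x*) = x*` this is the optimality
condition `c - diag(q) x* = ρ x* / ‖x*‖`, and convexity of `f₂` (via Cauchy–Schwarz) finishes.
Part (i) is Cauchy–Schwarz alone.
-/

open Finset Set

theorem HasDerivAt.nonneg_of_isMinOn_Ici {f : ℝ → ℝ} {f' a : ℝ} (hf : HasDerivAt f f' a)
    (hmin : IsMinOn f (Ici a) a) : 0 ≤ f' := by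
  have hcone : (1 : ℝ) ∈ posTangentConeAt (Ici a) a :=
    one_mem_posTangentConeAt_iff_frequently.2 <|
      Filter.Eventually.frequently (eventually_nhdsWithin_of_forall fun _ hx => le_of_lt hx.out)
  simpa using hmin.localize.hasFDerivWithinAt_nonneg hf.hasDerivWithinAt.hasFDerivWithinAt hcone

section

variable {ι : Type*} [Fintype ι]

noncomputable def l2QuadObjective (q c : ι → ℝ) (ρ : ℝ) (x : ι → ℝ) : ℝ :=
  (1 / 2) * ∑ k, q k * x k ^ 2 - ∑ k, c k * x k + ρ * Real.sqrt (∑ k, x k ^ 2)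

noncomputable def l2QuadDual (q c : ι → ℝ) (ρ : ℝ) (l : ℝ) : ℝ :=
  ∑ k, c k ^ 2 / (q k + l * q k ^ 2) + ρ ^ 2 * l

variable {q c : ι → ℝ} {ρ : ℝ}

theorem isMinOn_zero_l2QuadObjective (hq : ∀ k, 0 ≤ q k)
    (hc : Real.sqrt (∑ k, c k ^ 2) ≤ ρ) : IsMinOn (l2QuadObjective q c ρ) univ 0 := by
  refine fun x _ => ?_
  have hquad : 0 ≤ ∑ k, q k * x k ^ 2 := sum_nonneg fun k _ => mul_nonneg (hq k) (sq_nonneg _)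
  have hcs := Real.sum_mul_le_sqrt_mul_sqrt univ c x
  have hlin := mul_le_mul_of_nonneg_right hc (Real.sqrt_nonneg (∑ k, x k ^ 2))
  show l2QuadObjective q c ρ 0 ≤ l2QuadObjective q c ρ x
  simp only [l2QuadObjective, Pi.zero_apply, ne_eq, OfNat.ofNat_ne_zero, not_false_eq_true, zero_pow, mul_zero, sum_const_zero,
    Real.sqrt_zero, sub_zero, add_zero]
  linarith

theorem isMinOn_l2QuadObjective_of_optimality {lam : ℝ} {xs : ι → ℝ} (hq : ∀ k, 0 ≤ q k)
    (hlam : 0 < lam) (hgrad : ∀ k, lam * (c k - q k * xs k) = xs k)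
    (hnorm : Real.sqrt (∑ k, xs k ^ 2) = lam * ρ) :
    IsMinOn (l2QuadObjective q c ρ) univ xs := by
  refine fun x _ => ?_
  have hquad : ∑ k, (q k * xs k - c k) * (x k - xs k) ≤
      (1 / 2) * ∑ k, q k * x k ^ 2 - ∑ k, c k * x k
        - ((1 / 2) * ∑ k, q k * xs k ^ 2 - ∑ k, c k * xs k) := by
    simp only [mul_sum, ← sum_sub_distrib]
    exact sum_le_sum fun k _ => by nlinarith [mul_nonneg (hq k) (sq_nonneg (x k - xs k))]
  have hlin : lam * ∑ k, (q k * xs k - c k) * (x k - xs k) =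
      (lam * ρ) ^ 2 - ∑ k, xs k * x k := by
    rw [← hnorm, Real.sq_sqrt (sum_nonneg fun k _ => sq_nonneg _), mul_sum, ← sum_sub_distrib]
    exact sum_congr rfl fun k _ => by linear_combination (xs k - x k) * hgrad k
  have hcs := Real.sum_mul_le_sqrt_mul_sqrt univ xs x
  rw [hnorm] at hcs
  show l2QuadObjective q c ρ xs ≤ l2QuadObjective q c ρ x
  simp only [l2QuadObjective, hnorm]
  nlinarith [mul_le_mul_of_nonneg_left hquad hlam.le]

theorem isMinOn_l2QuadObjective_of_dual_stationary (hq : ∀ k, 0 < q k) (hρ : 0 ≤ ρ) {lam : ℝ}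
    (hlam : 0 < lam) (hstat : ∑ k, c k ^ 2 / (1 + lam * q k) ^ 2 = ρ ^ 2) :
    IsMinOn (l2QuadObjective q c ρ) univ (fun k => lam * c k / (1 + lam * q k)) := by
  have hden (k : ι) : 1 + lam * q k ≠ 0 := by have := hq k; positivity
  refine isMinOn_l2QuadObjective_of_optimality (fun k => (hq k).le) hlam (fun k => ?_) ?_
  · field_simp [hden k]
    ring
  · have hsq : ∑ k, (lam * c k / (1 + lam * q k)) ^ 2 = (lam * ρ) ^ 2 := by
      simp only [div_pow, mul_pow, ← mul_div_assoc', ← mul_sum, hstat]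
    rw [hsq, Real.sqrt_sq (by positivity)]

theorem hasDerivAt_l2QuadDual (hq : ∀ k, 0 < q k) {l : ℝ} (hl : 0 ≤ l) :
    HasDerivAt (l2QuadDual q c ρ) (ρ ^ 2 - ∑ k, c k ^ 2 / (1 + l * q k) ^ 2) l := by
  have hterm (k : ι) : HasDerivAt (fun l => c k ^ 2 / (q k + l * q k ^ 2))
      (-(c k ^ 2 / (1 + l * q k) ^ 2)) l := by
    have hqk := hq k
    have hden : q k + l * q k ^ 2 ≠ 0 := by positivity
    refine ((hasDerivAt_const l (c k ^ 2)).div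
      (((hasDerivAt_id l).mul_const (q k ^ 2)).const_add (q k)) hden).congr_deriv ?_
    have : 1 + l * q k ≠ 0 := by positivity
    simp only [id]
    field_simp
    ring
  refine ((HasDerivAt.fun_sum (u := univ) fun k _ => hterm k).add
    ((hasDerivAt_id l).const_mul (ρ ^ 2))).congr_deriv ?_
  simp only [sum_neg_distrib, mul_one]
  ring

theorem pos_of_isMinOn_l2QuadDual (hq : ∀ k, 0 < q k) (hρ : 0 ≤ ρ)
    (hρc : ρ < Real.sqrt (∑ k, c k ^ 2)) {lam : ℝ} (hlam : 0 ≤ lam)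
    (hmin : IsMinOn (l2QuadDual q c ρ) (Ici 0) lam) : 0 < lam := by
  refine hlam.lt_of_ne fun h0 => ?_
  subst h0
  have hderiv := (hasDerivAt_l2QuadDual (c := c) (ρ := ρ) hq le_rfl).nonneg_of_isMinOn_Ici hmin
  have hsq : ρ ^ 2 < ∑ k, c k ^ 2 := (Real.lt_sqrt hρ).1 hρc
  simp only [zero_mul, add_zero, one_pow, div_one, sub_nonneg] at hderiv
  linarith

theorem sum_eq_of_isMinOn_l2QuadDual (hq : ∀ k, 0 < q k) {lam : ℝ} (hlam : 0 < lam)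
    (hmin : IsMinOn (l2QuadDual q c ρ) (Ici 0) lam) :
    ∑ k, c k ^ 2 / (1 + lam * q k) ^ 2 = ρ ^ 2 :=
  (sub_eq_zero.1 ((hmin.isLocalMin (Ici_mem_nhds hlam)).hasDerivAt_eq_zero
    (hasDerivAt_l2QuadDual hq hlam.le))).symm

end

/-- the minimizer of the `ℓ₂` regularized separable quadratic objective
`f₂(x) = (1/2) xᵀ diag(q) x − cᵀ x + ρ ‖x‖₂`:
(i) if `‖c‖₂ ≤ ρ` then `x* = 0` minimizes `f₂`;
(ii) if `‖c‖₂ > ρ`, all `c_k ≠ 0`, and `λ* ≥ 0` minimizes the dual objective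
`h(λ) = ∑ k, c k²/(q k + λ q k²) + ρ² λ` over `{λ ≥ 0}`, then `x*` defined by
`x*_k = λ* c_k / (1 + λ* q_k)` minimizes `f₂`. -/
theorem l2_quad_solution (K : ℕ) (q c : Fin K → ℝ)
    (hq : ∀ k, 0 < q k) (ρ : ℝ) (hρ : 0 < ρ) :
    ((Real.sqrt (∑ k, c k ^ 2) ≤ ρ) →
      IsMinOn
        (fun x : Fin K → ℝ =>
          (1 / 2) * ∑ k, q k * x k ^ 2 - ∑ k, c k * x k + ρ * Real.sqrt (∑ k, x k ^ 2))
        (Set.univ : Set (Fin K → ℝ)) 0) ∧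
    (ρ < Real.sqrt (∑ k, c k ^ 2) → (∀ k, c k ≠ 0) →
      ∀ lam : ℝ, 0 ≤ lam →
        IsMinOn (fun l : ℝ => ∑ k, c k ^ 2 / (q k + l * q k ^ 2) + ρ ^ 2 * l)
          {l : ℝ | 0 ≤ l} lam →
        IsMinOn
          (fun x : Fin K → ℝ =>
            (1 / 2) * ∑ k, q k * x k ^ 2 - ∑ k, c k * x k + ρ * Real.sqrt (∑ k, x k ^ 2))
          (Set.univ : Set (Fin K → ℝ)) (fun k => lam * c k / (1 + lam * q k))) := by
  refine ⟨isMinOn_zero_l2QuadObjective fun k => (hq k).le, fun hρc _ lam hlam hmin => ?_⟩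
  have hpos : 0 < lam := pos_of_isMinOn_l2QuadDual hq hρ.le hρc hlam hmin
  exact isMinOn_l2QuadObjective_of_dual_stationary hq hρ.le hpos
    (sum_eq_of_isMinOn_l2QuadDual hq hpos hmin)
end

section
/- Let q, c, b ∈ R^K with q_k > 0, c_k > 0, b_k > 0 for all k, let ρ > 0 and p > 1 with dual exponent p̄ defined by 1/p + 1/p̄ = 1. If r* minimizes the objective −Σ_k q_k log(r_k + c_k) − bᵀ r over the set {r ∈ R^K : r ≥ 0 componentwise, ‖r‖_{p̄} = ρ}, then z* defined componentwise by z_k* = b_k + q_k / (c_k + r_k*) maximizes Σ_k q_k log(z_k − b_k) − cᵀ z − ρ ‖z‖_p over {z ∈ R^K : z_k > b_k for all k}. -/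
/-!
The dual objective is antitone on the nonnegative orthant, so `r*` also minimizes it over the
convex set `{r ≥ 0, ‖r‖_{p̄} ≤ ρ}`. There its gradient is `-z*`, and the first-order condition
`⟨z*, r⟩ ≤ ⟨z*, r*⟩` tested against the Hölder-extremal `r` gives, together with Hölder's
inequality, `⟨z*, r*⟩ = ρ ‖z*‖_p`. For any feasible `z`, Hölder bounds the primal objective by
the separable Lagrangian `∑ₖ q_k log (z_k - b_k) - (c_k + r*_k) z_k`, which `z*` maximizes
coordinatewise and at which the bound is an equality.
-/

open Real Finset

namespace DiagonalUpdate

variable {ι : Type*} [Fintype ι]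

noncomputable def lpNorm (p : ℝ) (w : ι → ℝ) : ℝ := (∑ i, |w i| ^ p) ^ (1 / p)

variable {p pd ρ : ℝ} {v w : ι → ℝ}

lemma lpNorm_nonneg : 0 ≤ lpNorm p w :=
  rpow_nonneg (sum_nonneg fun _ _ => rpow_nonneg (abs_nonneg _) _) _

lemma lpNorm_zero (hp : 0 < p) : lpNorm p (0 : ι → ℝ) = 0 := by
  simp [lpNorm, zero_rpow hp.ne', hp.ne']

lemma lpNorm_eq_zero (hp : 0 < p) : lpNorm p w = 0 ↔ w = 0 := by
  refine ⟨fun h => ?_, fun h => h ▸ lpNorm_zero hp⟩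
  have hsum : ∑ i, |w i| ^ p = 0 := by
    rw [lpNorm, rpow_eq_zero (sum_nonneg fun _ _ => rpow_nonneg (abs_nonneg _) _)
      (one_div_pos.2 hp).ne'] at h
    exact h
  rw [sum_eq_zero_iff_of_nonneg fun _ _ => rpow_nonneg (abs_nonneg _) _] at hsum
  ext i
  simpa [rpow_eq_zero (abs_nonneg _) hp.ne'] using hsum i (mem_univ i)

lemma lpNorm_smul (hp : 0 < p) {l : ℝ} (hl : 0 ≤ l) : lpNorm p (l • w) = l * lpNorm p w := by
  have h : ∀ i, |(l • w) i| ^ p = l ^ p * |w i| ^ p := fun i => by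
    rw [Pi.smul_apply, smul_eq_mul, abs_mul, abs_of_nonneg hl, mul_rpow hl (abs_nonneg _)]
  simp_rw [lpNorm, h, ← mul_sum]
  rw [mul_rpow (rpow_nonneg hl p) (sum_nonneg fun _ _ => rpow_nonneg (abs_nonneg _) _),
    ← rpow_mul hl, mul_one_div_cancel hp.ne', rpow_one]

lemma lpNorm_add_le (hp : 1 ≤ p) : lpNorm p (v + w) ≤ lpNorm p v + lpNorm p w :=
  Lp_add_le univ v w hp

lemma sum_mul_le_lpNorm_mul_lpNorm (hpq : p.HolderConjugate pd) :
    ∑ i, v i * w i ≤ lpNorm p v * lpNorm pd w :=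
  inner_le_Lp_mul_Lq univ v w hpq

lemma convex_nonneg_lpNorm_le (hp : 1 ≤ p) :
    Convex ℝ {r : ι → ℝ | 0 ≤ r ∧ lpNorm p r ≤ ρ} := by
  rintro v ⟨hv, hvρ⟩ w ⟨hw, hwρ⟩ a b ha hb hab
  refine ⟨add_nonneg (smul_nonneg ha hv) (smul_nonneg hb hw), ?_⟩
  calc lpNorm p (a • v + b • w) ≤ a * lpNorm p v + b * lpNorm p w := by
        rw [← lpNorm_smul (by linarith) ha, ← lpNorm_smul (by linarith) hb]
        exact lpNorm_add_le hp
    _ ≤ a * ρ + b * ρ := by gcongr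
    _ = ρ := by rw [← add_mul, hab, one_mul]

-- The equality case of Hölder's inequality: `r ∝ z ^ (p - 1)`.
lemma exists_nonneg_lpNorm_le_sum_mul_eq (hpq : p.HolderConjugate pd) {z : ι → ℝ} (hz : 0 ≤ z)
    (hρ : 0 ≤ ρ) : ∃ r, 0 ≤ r ∧ lpNorm pd r ≤ ρ ∧ ∑ i, z i * r i = ρ * lpNorm p z := by
  obtain ⟨T, hT⟩ : ∃ T, ∑ i, z i ^ p = T := ⟨_, rfl⟩
  have hnorm : lpNorm p z = T ^ (1 / p) := by simp_rw [lpNorm, abs_of_nonneg (hz _), hT]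
  rcases (hT ▸ sum_nonneg fun i _ => rpow_nonneg (hz i) p : 0 ≤ T).eq_or_lt with hT0 | hTpos
  · refine ⟨0, le_rfl, by rwa [lpNorm_zero hpq.symm.pos], ?_⟩
    simp [hnorm, ← hT0, zero_rpow (inv_pos.2 hpq.pos).ne']
  set C := ρ / T ^ (1 / pd)
  have hC : 0 ≤ C := div_nonneg hρ (rpow_nonneg hTpos.le _)
  refine ⟨C • fun i => z i ^ (p - 1), smul_nonneg hC fun i => rpow_nonneg (hz i) _, ?_, ?_⟩
  · have hpow : ∀ i, |z i ^ (p - 1)| ^ pd = z i ^ p := fun i => by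
      rw [abs_of_nonneg (rpow_nonneg (hz i) _), ← rpow_mul (hz i), hpq.sub_one_mul_conj]
    rw [lpNorm_smul hpq.symm.pos hC, lpNorm]
    simp_rw [hpow, hT]
    rw [div_mul_cancel₀ _ (rpow_pos_of_pos hTpos _).ne']
  · have hmul : ∀ i, z i * (C • fun i => z i ^ (p - 1)) i = C * z i ^ p := fun i => by
      rw [Pi.smul_apply, smul_eq_mul, mul_left_comm,
        ← rpow_one_add' (hz i) (by rw [add_sub_cancel]; exact hpq.ne_zero), add_sub_cancel]
    have hdual : T ^ (1 / p) = T / T ^ (1 / pd) := by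
      have h : 1 - 1 / pd = 1 / p := by rw [one_div, one_div, hpq.symm.one_sub_inv]
      rw [← rpow_one_sub' hTpos.le (h ▸ one_div_ne_zero hpq.ne_zero), h]
    rw [sum_congr rfl fun i _ => hmul i, ← mul_sum, hT, hnorm, hdual]
    ring

lemma isMinOn_lpBall_of_isMinOn_lpSphere {f : (ι → ℝ) → ℝ} {rs : ι → ℝ} (hp : 0 < p)
    (hf : AntitoneOn f (Set.Ici 0)) (hrs : 0 ≤ rs)
    (hmin : IsMinOn f {r | 0 ≤ r ∧ lpNorm p r = ρ} rs) :
    IsMinOn f {r | 0 ≤ r ∧ lpNorm p r ≤ ρ} rs := by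
  refine isMinOn_iff.2 fun w ⟨hw, hwρ⟩ => ?_
  rcases (lpNorm_nonneg : 0 ≤ lpNorm p w).eq_or_lt with hw0 | hwpos
  · rw [(lpNorm_eq_zero hp).1 hw0.symm]
    exact hf (Set.mem_Ici.2 le_rfl) hrs hrs
  -- scaling `w` up onto the sphere can only decrease `f`
  set l := ρ / lpNorm p w
  have hl : 1 ≤ l := (one_le_div hwpos).2 hwρ
  have hlw : w ≤ l • w := fun i => le_mul_of_one_le_left (hw i) hl
  have hlwρ : lpNorm p (l • w) = ρ := by
    rw [lpNorm_smul hp (by linarith), div_mul_cancel₀ _ hwpos.ne']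
  calc f rs ≤ f (l • w) := isMinOn_iff.1 hmin _ ⟨hw.trans hlw, hlwρ⟩
    _ ≤ f w := hf hw (hw.trans hlw) hlw

lemma isMaxOn_mul_log_sub_sub_mul {q a b : ℝ} (hq : 0 < q) (ha : 0 < a) :
    IsMaxOn (fun u => q * log (u - b) - a * u) (Set.Ioi b) (b + q / a) := by
  refine isMaxOn_iff.2 fun u (hu : b < u) => ?_
  have hqa : 0 < q / a := div_pos hq ha
  have h := log_le_sub_one_of_pos (div_pos (sub_pos.2 hu) hqa)
  rw [log_div (sub_pos.2 hu).ne' hqa.ne'] at h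
  have h1 : q * ((u - b) / (q / a)) = a * (u - b) := by field_simp
  have h2 : a * (q / a) = q := by field_simp
  simp only [add_sub_cancel_left]
  nlinarith [mul_le_mul_of_nonneg_left h hq.le]

variable {q c b : ι → ℝ}

noncomputable def dualObjective (q c b r : ι → ℝ) : ℝ :=
  -∑ i, q i * log (r i + c i) - ∑ i, b i * r i

lemma antitoneOn_dualObjective (hq : ∀ i, 0 ≤ q i) (hc : ∀ i, 0 < c i) (hb : ∀ i, 0 ≤ b i) :
    AntitoneOn (dualObjective q c b) (Set.Ici 0) := by
  intro v hv w _ hvw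
  have hlog : ∀ i ∈ univ, q i * log (v i + c i) ≤ q i * log (w i + c i) := fun i _ =>
    mul_le_mul_of_nonneg_left
      (log_le_log (by have : 0 ≤ v i := hv i; linarith [hc i]) (by linarith [hvw i])) (hq i)
  have hlin : ∀ i ∈ univ, b i * v i ≤ b i * w i := fun i _ =>
    mul_le_mul_of_nonneg_left (hvw i) (hb i)
  unfold dualObjective
  linarith [sum_le_sum hlog, sum_le_sum hlin]

lemma hasFDerivAt_dualObjective {r : ι → ℝ} (hr : ∀ i, 0 < r i + c i) :
    HasFDerivAt (dualObjective q c b)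
      (-∑ i, (q i / (r i + c i) + b i) • ContinuousLinearMap.proj (R := ℝ) i) r := by
  have hlog : ∀ i ∈ univ, HasFDerivAt (fun r : ι → ℝ => q i * log (r i + c i))
      ((q i / (r i + c i)) • ContinuousLinearMap.proj (R := ℝ) i) r := fun i _ => by
    have := (((hasFDerivAt_apply (𝕜 := ℝ) i r).add_const (c i)).log (hr i).ne').const_mul (q i)
    simpa [smul_smul, div_eq_mul_inv] using this
  have hlin : ∀ i ∈ univ, HasFDerivAt (fun r : ι → ℝ => b i * r i)
      (b i • ContinuousLinearMap.proj (R := ℝ) i) r := fun i _ =>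
    (hasFDerivAt_apply (𝕜 := ℝ) i r).const_mul (b i)
  have hsplit : dualObjective q c b =
      (-∑ i, fun r : ι → ℝ => q i * log (r i + c i)) - ∑ i, fun r : ι → ℝ => b i * r i := by
    ext r
    simp [dualObjective, Finset.sum_apply]
  rw [hsplit]
  refine ((HasFDerivAt.sum hlog).neg.sub (HasFDerivAt.sum hlin)).congr_fderiv ?_
  simp only [add_smul, sum_add_distrib]
  abel

lemma sum_mul_le_of_isMinOn_dualObjective {s : Set (ι → ℝ)} (hs : Convex ℝ s) {rs r : ι → ℝ}
    (hrs : rs ∈ s) (hr : r ∈ s) (hcr : ∀ i, 0 < c i + rs i)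
    (hmin : IsMinOn (dualObjective q c b) s rs) :
    ∑ i, (b i + q i / (c i + rs i)) * r i ≤ ∑ i, (b i + q i / (c i + rs i)) * rs i := by
  have h := hmin.localize.hasFDerivWithinAt_nonneg
    (hasFDerivAt_dualObjective fun i => by linarith [hcr i]).hasFDerivWithinAt
    (sub_mem_posTangentConeAt_of_segment_subset (hs.segment_subset hrs hr))
  simp only [neg_apply, FunLike.coe_sum, Finset.sum_apply,
    smul_apply, ContinuousLinearMap.proj_apply, Pi.sub_apply, smul_eq_mul] at h
  have hsplit : ∑ i, (b i + q i / (c i + rs i)) * r i - ∑ i, (b i + q i / (c i + rs i)) * rs i =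
      ∑ i, (q i / (rs i + c i) + b i) * (r i - rs i) := by
    rw [← sum_sub_distrib]
    exact sum_congr rfl fun i _ => by rw [add_comm (c i)]; ring
  linarith

variable {rs : ι → ℝ}

lemma sum_mul_eq_of_isMinOn_lpBall (hpq : p.HolderConjugate pd) (hq : ∀ i, 0 ≤ q i)
    (hb : ∀ i, 0 ≤ b i) (hrs : 0 ≤ rs) (hcr : ∀ i, 0 < c i + rs i) (hρ : lpNorm pd rs = ρ)
    (hmin : IsMinOn (dualObjective q c b) {r | 0 ≤ r ∧ lpNorm pd r ≤ ρ} rs) :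
    ∑ i, (b i + q i / (c i + rs i)) * rs i =
      ρ * lpNorm p (fun i => b i + q i / (c i + rs i)) := by
  have hz : 0 ≤ fun i => b i + q i / (c i + rs i) := fun i =>
    add_nonneg (hb i) (div_nonneg (hq i) (hcr i).le)
  obtain ⟨r, hr, hrρ, hzr⟩ := exists_nonneg_lpNorm_le_sum_mul_eq hpq hz (hρ ▸ lpNorm_nonneg)
  refine le_antisymm ?_ (hzr ▸ sum_mul_le_of_isMinOn_dualObjective
    (convex_nonneg_lpNorm_le hpq.symm.lt.le) ⟨hrs, hρ.le⟩ ⟨hr, hrρ⟩ hcr hmin)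
  calc _ ≤ lpNorm p (fun i => b i + q i / (c i + rs i)) * lpNorm pd rs :=
        sum_mul_le_lpNorm_mul_lpNorm hpq
    _ = _ := by rw [hρ, mul_comm]

lemma isMaxOn_of_sum_mul_eq (hpq : p.HolderConjugate pd) (hq : ∀ i, 0 < q i)
    (hcr : ∀ i, 0 < c i + rs i) (hρ : lpNorm pd rs = ρ)
    (heq : ∑ i, (b i + q i / (c i + rs i)) * rs i =
      ρ * lpNorm p (fun i => b i + q i / (c i + rs i))) :
    IsMaxOn (fun z => ∑ i, q i * log (z i - b i) - ∑ i, c i * z i - ρ * lpNorm p z)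
      {z | ∀ i, b i < z i} (fun i => b i + q i / (c i + rs i)) := by
  refine isMaxOn_iff.2 fun w hw => ?_
  have hlagrangian : ∀ v : ι → ℝ, ∑ i, q i * log (v i - b i) - ∑ i, c i * v i - ∑ i, v i * rs i =
      ∑ i, (q i * log (v i - b i) - (c i + rs i) * v i) := fun v => by
    simp only [sum_sub_distrib, add_mul, sum_add_distrib, mul_comm (v _) (rs _)]
    ring
  have hholder : ∑ i, w i * rs i ≤ ρ * lpNorm p w := by
    rw [← hρ, mul_comm]
    exact sum_mul_le_lpNorm_mul_lpNorm hpq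
  calc _ ≤ ∑ i, q i * log (w i - b i) - ∑ i, c i * w i - ∑ i, w i * rs i := by linarith
    _ = ∑ i, (q i * log (w i - b i) - (c i + rs i) * w i) := hlagrangian w
    _ ≤ ∑ i, (q i * log (b i + q i / (c i + rs i) - b i) -
          (c i + rs i) * (b i + q i / (c i + rs i))) := sum_le_sum fun i _ =>
        isMaxOn_iff.1 (isMaxOn_mul_log_sub_sub_mul (hq i) (hcr i)) (w i) (hw i)
    _ = _ := by rw [← hlagrangian, heq]

end DiagonalUpdate

open DiagonalUpdate

theorem diagonal_update_from_dual_general (K : ℕ) (q c b : Fin K → ℝ)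
    (hq : ∀ k, 0 < q k) (hc : ∀ k, 0 < c k) (hb : ∀ k, 0 < b k)
    (ρ p pd : ℝ) (hp : 1 < p) (hpd : 1 / p + 1 / pd = 1)
    (rs : Fin K → ℝ)
    (hmem : (∀ k, 0 ≤ rs k) ∧ (∑ k, |rs k| ^ pd) ^ (1 / pd) = ρ)
    (hmin : IsMinOn
      (fun r : Fin K → ℝ => -∑ k, q k * Real.log (r k + c k) - ∑ k, b k * r k)
      {r : Fin K → ℝ | (∀ k, 0 ≤ r k) ∧ (∑ k, |r k| ^ pd) ^ (1 / pd) = ρ} rs) :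
    ((fun k => b k + q k / (c k + rs k)) ∈ {z : Fin K → ℝ | ∀ k, b k < z k}) ∧
    IsMaxOn
      (fun z : Fin K → ℝ =>
        ∑ k, q k * Real.log (z k - b k) - ∑ k, c k * z k
          - ρ * (∑ k, |z k| ^ p) ^ (1 / p))
      {z : Fin K → ℝ | ∀ k, b k < z k}
      (fun k => b k + q k / (c k + rs k)) := by
  obtain ⟨hrs, hρ⟩ := hmem
  have hpq : p.HolderConjugate pd := holderConjugate_iff.2 ⟨hp, by simpa only [one_div] using hpd⟩
  have hcr : ∀ k, 0 < c k + rs k := fun k => add_pos_of_pos_of_nonneg (hc k) (hrs k)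
  have hball : IsMinOn (dualObjective q c b) {r | 0 ≤ r ∧ lpNorm pd r ≤ ρ} rs :=
    isMinOn_lpBall_of_isMinOn_lpSphere hpq.symm.pos
      (antitoneOn_dualObjective (fun k => (hq k).le) hc (fun k => (hb k).le)) hrs hmin
  refine ⟨fun k => lt_add_of_pos_right _ (div_pos (hq k) (hcr k)), ?_⟩
  exact isMaxOn_of_sum_mul_eq hpq hq hcr hρ
    (sum_mul_eq_of_isMinOn_lpBall hpq (fun k => (hq k).le) (fun k => (hb k).le) hrs hcr hρ hball)

/-- if `r*` minimizes `−∑ k q k log(r k + c k) − bᵀ r` over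
`{r : r ≥ 0, ‖r‖_{p̄} = ρ}` (where `1/p + 1/p̄ = 1`), then `z*` defined by
`z*_k = b_k + q_k/(c_k + r*_k)` maximizes `∑ k q k log(z k − b k) − cᵀ z − ρ ‖z‖_p` over
`{z : z k > b k for all k}`. -/
theorem diagonal_update_from_dual (K : ℕ) (q c b : Fin K → ℝ)
    (hq : ∀ k, 0 < q k) (hc : ∀ k, 0 < c k) (hb : ∀ k, 0 < b k)
    (ρ p pd : ℝ) (hρ : 0 < ρ) (hp : 1 < p) (hpd : 1 / p + 1 / pd = 1)
    (rs : Fin K → ℝ)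
    (hmem : (∀ k, 0 ≤ rs k) ∧ (∑ k, |rs k| ^ pd) ^ (1 / pd) = ρ)
    (hmin : IsMinOn
      (fun r : Fin K → ℝ => -∑ k, q k * Real.log (r k + c k) - ∑ k, b k * r k)
      {r : Fin K → ℝ | (∀ k, 0 ≤ r k) ∧ (∑ k, |r k| ^ pd) ^ (1 / pd) = ρ} rs) :
    ((fun k => b k + q k / (c k + rs k)) ∈ {z : Fin K → ℝ | ∀ k, b k < z k}) ∧
    IsMaxOn
      (fun z : Fin K → ℝ =>
        ∑ k, q k * Real.log (z k - b k) - ∑ k, c k * z k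
          - ρ * (∑ k, |z k| ^ p) ^ (1 / p))
      {z : Fin K → ℝ | ∀ k, b k < z k}
      (fun k => b k + q k / (c k + rs k)) :=
  diagonal_update_from_dual_general K q c b hq hc hb ρ p pd hp hpd rs hmem hmin
end

section
/- Let q, c, b ∈ R^K with q_k > 0, c_k > 0, b_k > 0 for all k, and let ρ > 0. For ν > max_k b_k define r(ν) ∈ R^K componentwise by r_k(ν) = max(0, q_k/(ν − b_k) − c_k). If ν > max_k b_k satisfies Σ_k r_k(ν) = ρ, then r(ν) is the minimizer of the continuous logarithmic knapsack objective −Σ_k q_k log(r_k + c_k) − bᵀ r over the set {r ∈ R^K : r ≥ 0 componentwise, Σ_k r_k = ρ}. -/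
/-!
Lagrangian sufficiency: with the multiplier `ν` of the budget constraint, the Lagrangian
`∑ₖ (-qₖ log (rₖ + cₖ) - bₖ rₖ + ν rₖ)` separates over the coordinates, and
`r_k(ν) = max 0 (q_k/(ν - b_k) - c_k)` minimizes the `k`-th summand over `rₖ ≥ 0`: the summand is
convex, and at `r_k(ν)` its derivative `ν - b_k - q_k/(r_k(ν) + c_k)` vanishes when `r_k(ν) > 0`
and is nonnegative when `r_k(ν) = 0`. On the budget set the multiplier term is the constant `ν ρ`.
-/

open Finset Real

lemma Real.log_le_log_add_sub_div {y z : ℝ} (hy : 0 < y) (hz : 0 < z) :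
    log y ≤ log z + (y - z) / z := by
  have h := log_le_sub_one_of_pos (div_pos hy hz)
  rw [log_div hy.ne' hz.ne'] at h
  have hyz : y / z - 1 = (y - z) / z := by field_simp
  linarith

theorem isMinOn_sum_of_isMinOn_add_mul {ι : Type*} [Fintype ι] {g : ι → ℝ → ℝ} {D : Set ℝ}
    {s : ι → ℝ} {ν ρ : ℝ} (hg : ∀ k, IsMinOn (fun x => g k x + ν * x) D (s k))
    (hs : ∑ k, s k = ρ) :
    IsMinOn (fun r : ι → ℝ => ∑ k, g k (r k)) {r | (∀ k, r k ∈ D) ∧ ∑ k, r k = ρ} s := by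
  rintro r ⟨hrD, hrρ⟩
  have h := sum_le_sum fun k (_ : k ∈ univ) => isMinOn_iff.mp (hg k) (r k) (hrD k)
  simp only [sum_add_distrib, ← mul_sum, hs, hrρ] at h
  exact le_of_add_le_add_right h

section KnapsackTerm

variable {q c b ν : ℝ}

lemma knapsack_marginal_mul_sub_le (hq : 0 ≤ q) (hc : 0 < c) (hν : b < ν) {x : ℝ} (hx : 0 ≤ x) :
    (q / (max 0 (q / (ν - b) - c) + c) + b) * (x - max 0 (q / (ν - b) - c))
      ≤ ν * (x - max 0 (q / (ν - b) - c)) := by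
  have hνb : 0 < ν - b := sub_pos.2 hν
  rcases le_or_gt (q / (ν - b) - c) 0 with hs | hs
  · rw [max_eq_left hs, zero_add, sub_zero]
    have hqc : q / c ≤ ν - b := by
      rw [div_le_iff₀ hc]
      have := (div_le_iff₀ hνb).1 (sub_nonpos.1 hs)
      linarith
    nlinarith
  · have hq0 : q ≠ 0 := by
      rintro rfl
      simp only [zero_div, zero_sub, neg_pos] at hs
      linarith
    have hmarginal : q / (max 0 (q / (ν - b) - c) + c) = ν - b := by
      rw [max_eq_right hs.le, sub_add_cancel]
      field_simp
    rw [hmarginal, sub_add_cancel]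

lemma isMinOn_knapsack_term (hq : 0 ≤ q) (hc : 0 < c) (hν : b < ν) :
    IsMinOn (fun x => -(q * log (x + c)) - b * x + ν * x) (Set.Ici 0)
      (max 0 (q / (ν - b) - c)) := by
  refine isMinOn_iff.mpr fun x (hx : 0 ≤ x) => ?_
  set s := max 0 (q / (ν - b) - c)
  have hs : 0 < s + c := add_pos_of_nonneg_of_pos (le_max_left _ _) hc
  have tangent := mul_le_mul_of_nonneg_left
    (log_le_log_add_sub_div (add_pos_of_nonneg_of_pos hx hc) hs) hq
  have slack := knapsack_marginal_mul_sub_le hq hc hν hx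
  have hrewrite : q * ((x + c - (s + c)) / (s + c)) = q / (s + c) * (x - s) := by ring
  nlinarith

end KnapsackTerm

theorem log_knapsack_piecewise_solution_general (K : ℕ) (q c b : Fin K → ℝ)
    (hq : ∀ k, 0 < q k) (hc : ∀ k, 0 < c k)
    (ρ : ℝ)
    (ν : ℝ) (hν : ∀ k, b k < ν)
    (hsum : ∑ k, max 0 (q k / (ν - b k) - c k) = ρ) :
    ((∀ k, (0 : ℝ) ≤ max 0 (q k / (ν - b k) - c k)) ∧
      ∑ k, max 0 (q k / (ν - b k) - c k) = ρ) ∧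
    IsMinOn
      (fun r : Fin K → ℝ => -∑ k, q k * Real.log (r k + c k) - ∑ k, b k * r k)
      {r : Fin K → ℝ | (∀ k, 0 ≤ r k) ∧ ∑ k, r k = ρ}
      (fun k => max 0 (q k / (ν - b k) - c k)) := by
  refine ⟨⟨fun k => le_max_left _ _, hsum⟩, ?_⟩
  have hterm k := isMinOn_knapsack_term (hq k).le (hc k) (hν k)
  convert isMinOn_sum_of_isMinOn_add_mul hterm hsum using 1
  · ext r
    simp only [sum_sub_distrib, sum_neg_distrib]
  · rfl

/-- with `r_k(ν) = max(0, q_k/(ν − b_k) − c_k)` for `ν > max_k b_k`, if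
`∑ k r_k(ν) = ρ` then `r(ν)` minimizes the continuous logarithmic knapsack objective
`−∑ k q k log(r k + c k) − bᵀ r` over `{r : r ≥ 0, ∑ k r k = ρ}`. -/
theorem log_knapsack_piecewise_solution (K : ℕ) (q c b : Fin K → ℝ)
    (hq : ∀ k, 0 < q k) (hc : ∀ k, 0 < c k) (hb : ∀ k, 0 < b k)
    (ρ : ℝ) (hρ : 0 < ρ)
    (ν : ℝ) (hν : ∀ k, b k < ν)
    (hsum : ∑ k, max 0 (q k / (ν - b k) - c k) = ρ) :
    ((∀ k, (0 : ℝ) ≤ max 0 (q k / (ν - b k) - c k)) ∧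
      ∑ k, max 0 (q k / (ν - b k) - c k) = ρ) ∧
    IsMinOn
      (fun r : Fin K → ℝ => -∑ k, q k * Real.log (r k + c k) - ∑ k, b k * r k)
      {r : Fin K → ℝ | (∀ k, 0 ≤ r k) ∧ ∑ k, r k = ρ}
      (fun k => max 0 (q k / (ν - b k) - c k)) :=
  log_knapsack_piecewise_solution_general K q c b hq hc ρ ν hν hsum
end
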